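/- arXiv:1806.07949 — 6 statements merged into one kernel-verified Lean document; each statement's English description precedes it below -/
import Mathlib

section
/- The series ∑_{m=0}^∞ a/((m+1)(m+a)) with a = 7/2 equals (7/5)·(46/15 − 2·log 2). -/
open Filter Real Topology

private lemma partial_sum_eq (n : ℕ) :
    (∑ m ∈ Finset.range n, (7/2 : ℝ) / ((m + 1) * (m + (7/2 : ℝ)))) =
      (7/5) * ((harmonic n : ℝ) - 2 * (harmonic (2*n+6) : ℝ) + (harmonic (n+3) : ℝ) + 46/15) := by
  induction n with
  | zero =>
      simp only [Finset.range_zero, Finset.sum_empty, Nat.zero_eq]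
      norm_num [harmonic, Finset.sum_range_succ]
  | succ n ih =>
      rw [Finset.sum_range_succ, ih]
      have h1 : 2*(n+1)+6 = (2*n+6)+1+1 := by ring
      rw [h1, harmonic_succ (2*n+6+1), harmonic_succ (2*n+6), show n+1+3 = (n+3)+1 from by ring, harmonic_succ (n+3), harmonic_succ n]
      push_cast
      have hn1 : (n : ℝ) + 1 ≠ 0 := by positivity
      have hn2 : (n : ℝ) + 7/2 ≠ 0 := by positivity
      have hn3 : (2*(n:ℝ)+6) + 1 ≠ 0 := by positivity
      have hn4 : (2*(n:ℝ)+6) + 1 + 1 ≠ 0 := by positivity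
      have hn5 : (n:ℝ) + 3 + 1 ≠ 0 := by positivity
      field_simp
      ring

private lemma tendsto_harm_comb :
    Tendsto (fun n : ℕ ↦ (harmonic n : ℝ) - 2 * (harmonic (2*n+6) : ℝ) + (harmonic (n+3) : ℝ))
      atTop (𝓝 (-(2 * Real.log 2))) := by
  have h2 : Tendsto (fun n : ℕ ↦ 2*n+6) atTop atTop :=
    tendsto_atTop_mono (fun n ↦ by simp only [id_eq]; omega) tendsto_id
  have h3 : Tendsto (fun n : ℕ ↦ n+3) atTop atTop :=
    tendsto_atTop_mono (fun n ↦ by simp only [id_eq]; omega) tendsto_id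
  have hA := Real.tendsto_harmonic_sub_log
  have hB := Real.tendsto_harmonic_sub_log.comp h2
  have hC := Real.tendsto_harmonic_sub_log.comp h3
  have hD : Tendsto (fun n : ℕ ↦ Real.log ((n : ℝ) / ((n : ℝ) + 3))) atTop (𝓝 0) := by
    have := ((Real.continuousAt_log one_ne_zero).tendsto).comp
      (tendsto_natCast_div_add_atTop (3 : ℝ))
    simpa [Function.comp_def] using this
  have key := ((hA.sub (hB.const_mul 2)).add hC).add hD
  have hlim : Real.eulerMascheroniConstant - 2 * Real.eulerMascheroniConstant +
      Real.eulerMascheroniConstant + 0 = 0 := by ring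
  rw [hlim] at key
  have key2 := key.add_const (-(2 * Real.log 2))
  rw [zero_add] at key2
  apply key2.congr'
  filter_upwards [eventually_ge_atTop 1] with n hn
  have hn0 : (0:ℝ) < n := by exact_mod_cast hn
  have hn3 : (0:ℝ) < (n:ℝ) + 3 := by positivity
  have e1 : ((2*n+6 : ℕ) : ℝ) = 2 * ((n:ℝ) + 3) := by push_cast; ring
  have e2 : ((n+3 : ℕ) : ℝ) = (n:ℝ) + 3 := by push_cast; ring
  simp only [Function.comp_def, e1, e2]
  rw [Real.log_mul (by norm_num) hn3.ne', Real.log_div hn0.ne' hn3.ne']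
  ring

theorem stmt_1 :
    (∑' m : ℕ, (7/2 : ℝ) / ((m + 1) * (m + (7/2 : ℝ)))) = (7/5) * (46/15 - 2 * Real.log 2) := by
  have hnn : ∀ m : ℕ, 0 ≤ (7/2 : ℝ) / ((m + 1) * (m + (7/2 : ℝ))) := by
    intro m; positivity
  have hs : HasSum (fun m : ℕ ↦ (7/2 : ℝ) / ((m + 1) * (m + (7/2 : ℝ))))
      ((7/5) * (46/15 - 2 * Real.log 2)) := by
    rw [hasSum_iff_tendsto_nat_of_nonneg hnn]
    have := (tendsto_harm_comb.add_const (46/15 : ℝ)).const_mul (7/5 : ℝ)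
    have heq : (7/5 : ℝ) * (-(2 * Real.log 2) + 46/15) = (7/5) * (46/15 - 2 * Real.log 2) := by
      ring
    rw [heq] at this
    exact this.congr fun n ↦ (partial_sum_eq n).symm
  exact hs.tsum_eq
end

section
/- The series ∑_{m=0}^∞ a/((m+1)(m+a)) with a = 4/3 equals 12 − 2π/√3 − 6·log 3. -/
open MeasureTheory intervalIntegral Real Set

noncomputable def Fanti (t : ℝ) : ℝ :=
  12*t - 6*Real.log (t^2+t+1) - (4*Real.sqrt 3) * Real.arctan ((2*t+1)/Real.sqrt 3)

lemma quadpos (t : ℝ) : (0:ℝ) < t^2+t+1 := by nlinarith [sq_nonneg (t + 1/2)]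

lemma sqrt3pos : (0:ℝ) < Real.sqrt 3 := Real.sqrt_pos.2 (by norm_num)

lemma hasDeriv_Fanti (t : ℝ) : HasDerivAt Fanti (12*t^2/(t^2+t+1)) t := by
  have h1 : HasDerivAt (fun t : ℝ => t^2+t+1) (2*t+1) t := by
    have := ((hasDerivAt_pow 2 t).add (hasDerivAt_id t)).add_const 1
    simpa using this
  have hlog : HasDerivAt (fun t : ℝ => Real.log (t^2+t+1)) ((2*t+1)/(t^2+t+1)) t := by
    exact h1.log (quadpos t).ne'
  have h2 : HasDerivAt (fun t : ℝ => (2*t+1)/Real.sqrt 3) (2/Real.sqrt 3) t := by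
    have := ((hasDerivAt_id t).const_mul 2).add_const 1
    simpa using this.div_const (Real.sqrt 3)
  have harc : HasDerivAt (fun t : ℝ => Real.arctan ((2*t+1)/Real.sqrt 3))
      ((1/(1+((2*t+1)/Real.sqrt 3)^2)) * (2/Real.sqrt 3)) t :=
    (Real.hasDerivAt_arctan _).comp t h2
  have hmain : HasDerivAt Fanti
      (12 - 6*((2*t+1)/(t^2+t+1)) - (4*Real.sqrt 3) * ((1/(1+((2*t+1)/Real.sqrt 3)^2)) * (2/Real.sqrt 3))) t := by
    have h12 : HasDerivAt (fun t : ℝ => 12*t) 12 t := by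
      simpa using (hasDerivAt_id t).const_mul (12:ℝ)
    exact (h12.sub (hlog.const_mul 6)).sub (harc.const_mul (4*Real.sqrt 3))
  convert hmain using 1
  have h3 : (Real.sqrt 3)^2 = 3 := Real.sq_sqrt (by norm_num)
  have hq := quadpos t
  have hs : Real.sqrt 3 ≠ 0 := sqrt3pos.ne'
  have hq' : t^2+t+1 ≠ 0 := hq.ne'
  have he : 1 + ((2*t+1)/Real.sqrt 3)^2 = 4*(t^2+t+1)/3 := by rw [div_pow, h3]; ring
  have hq2 : 1+t+t^2 ≠ 0 := by nlinarith
  rw [he]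
  field_simp
  ring_nf
  field_simp
  ring

lemma integral_closed_form :
    (∫ t in (0:ℝ)..1, 12*t^2/(t^2+t+1)) = 12 - 2 * Real.pi / Real.sqrt 3 - 6 * Real.log 3 := by
  have hcont : Continuous (fun t : ℝ => 12*t^2/(t^2+t+1)) := by
    apply Continuous.div (by continuity) (by continuity)
    exact fun t => (quadpos t).ne'
  rw [intervalIntegral.integral_eq_sub_of_hasDerivAt (fun t _ => hasDeriv_Fanti t)
    (hcont.intervalIntegrable 0 1)]
  have harc1 : Real.arctan ((2*1+1)/Real.sqrt 3) = π/3 := by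
    have h : ((2*(1:ℝ)+1)/Real.sqrt 3) = Real.sqrt 3 := by
      rw [show (2*(1:ℝ)+1) = Real.sqrt 3 * Real.sqrt 3 by
        rw [Real.mul_self_sqrt (by norm_num)]; norm_num]
      field_simp
    rw [h, ← Real.tan_pi_div_three, Real.arctan_tan] <;> linarith [Real.pi_pos]
  have harc0 : Real.arctan ((2*0+1)/Real.sqrt 3) = π/6 := by
    have h : ((2*(0:ℝ)+1)/Real.sqrt 3) = 1/Real.sqrt 3 := by norm_num
    rw [h, ← Real.tan_pi_div_six, Real.arctan_tan] <;> linarith [Real.pi_pos]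
  unfold Fanti
  rw [harc1, harc0]
  have h3 : Real.sqrt 3 * Real.sqrt 3 = 3 := Real.mul_self_sqrt (by norm_num)
  have hlog : Real.log (1+1+1 : ℝ) = Real.log 3 := by norm_num
  field_simp
  ring_nf
  rw [Real.log_one, sq, h3]
  ring

noncomputable def gg (m : ℕ) (t : ℝ) : ℝ := 12*t^(3*m+2)*(1-t)

lemma gg_cont (m : ℕ) : Continuous (gg m) := by unfold gg; continuity

lemma gg_integral (m : ℕ) :
    (∫ t in (0:ℝ)..1, gg m t) = 12/(3*(m:ℝ)+3) - 12/(3*(m:ℝ)+4) := by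
  have h : ∀ t : ℝ, gg m t = 12*t^(3*m+2) - 12*t^(3*m+3) := fun t => by unfold gg; ring
  simp_rw [h]
  rw [intervalIntegral.integral_sub ((by continuity : Continuous fun t:ℝ => 12*t^(3*m+2)).intervalIntegrable 0 1)
      ((by continuity : Continuous fun t:ℝ => 12*t^(3*m+3)).intervalIntegrable 0 1),
    intervalIntegral.integral_const_mul, intervalIntegral.integral_const_mul,
    integral_pow, integral_pow]
  push_cast
  norm_num
  ring

lemma term_eq (m : ℕ) :
    (4/3 : ℝ) / ((m + 1) * (m + (4/3 : ℝ))) = 12/(3*(m:ℝ)+3) - 12/(3*(m:ℝ)+4) := by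
  have hm : (0:ℝ) ≤ m := Nat.cast_nonneg m
  have h1 : ((m:ℝ)+1) ≠ 0 := by positivity
  have h2 : ((m:ℝ)+4/3) ≠ 0 := by positivity
  have h3 : (3*(m:ℝ)+3) ≠ 0 := by positivity
  have h4 : (3*(m:ℝ)+4) ≠ 0 := by positivity
  field_simp
  ring

lemma gg_nonneg {m : ℕ} {t : ℝ} (ht : t ∈ Set.Ioc (0:ℝ) 1) : 0 ≤ gg m t := by
  unfold gg
  have h1 : 0 ≤ t := le_of_lt ht.1
  have h2 : 0 ≤ 1 - t := by linarith [ht.2]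
  exact mul_nonneg (by positivity) h2

lemma c_summable : Summable (fun m : ℕ => 12/(3*(m:ℝ)+3) - 12/(3*(m:ℝ)+4)) := by
  have hbase : Summable (fun n : ℕ => (1:ℝ)/(n+1)^2) := by
    have := (summable_nat_add_iff 1).mpr (Real.summable_one_div_nat_pow.mpr (by norm_num : 1 < 2))
    simpa using this
  apply Summable.of_nonneg_of_le _ _ (hbase.mul_left 12)
  · intro m
    have hm : (0:ℝ) ≤ m := Nat.cast_nonneg m
    rw [sub_nonneg]
    gcongr <;> linarith
  · intro m
    have hm : (0:ℝ) ≤ m := Nat.cast_nonneg m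
    have h3 : (0:ℝ) < 3*(m:ℝ)+3 := by linarith
    have h4 : (0:ℝ) < 3*(m:ℝ)+4 := by linarith
    have h5 : (0:ℝ) < ((m:ℝ)+1)^2 := by positivity
    have heq : 12/(3*(m:ℝ)+3) - 12/(3*(m:ℝ)+4) = 12/((3*(m:ℝ)+3)*(3*(m:ℝ)+4)) := by
      field_simp; ring
    rw [heq, mul_one_div]
    gcongr
    nlinarith

lemma tsum_gg {t : ℝ} (ht : t ∈ Set.Ioo (0:ℝ) 1) :
    (∑' m : ℕ, gg m t) = 12*t^2/(t^2+t+1) := by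
  have ht3 : t^3 < 1 := pow_lt_one₀ ht.1.le ht.2 (by norm_num)
  have ht30 : (0:ℝ) ≤ t^3 := pow_nonneg ht.1.le 3
  have hgeo : (∑' m : ℕ, (t^3)^m) = (1-t^3)⁻¹ := tsum_geometric_of_lt_one ht30 ht3
  have h : ∀ m : ℕ, gg m t = (12*t^2*(1-t)) * (t^3)^m := by
    intro m; unfold gg; rw [← pow_mul, pow_add]; ring
  rw [tsum_congr h, tsum_mul_left, hgeo]
  have h1t : (1-t) ≠ 0 := by linarith [ht.2]
  have hq := quadpos t
  have hfac : 1 - t^3 = (1-t)*(t^2+t+1) := by ring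
  rw [hfac]
  field_simp

theorem stmt_3 :
    (∑' m : ℕ, (4/3 : ℝ) / ((m + 1) * (m + (4/3 : ℝ)))) = 12 - 2 * Real.pi / Real.sqrt 3 - 6 * Real.log 3 := by
  have hstep1 : ∀ m : ℕ, (4/3 : ℝ) / ((m + 1) * (m + (4/3 : ℝ)))
      = ∫ t in Set.Ioc (0:ℝ) 1, gg m t := by
    intro m
    rw [term_eq m, ← gg_integral m, intervalIntegral.integral_of_le (by norm_num : (0:ℝ) ≤ 1)]
  rw [tsum_congr hstep1]
  have hswap : (∑' m : ℕ, ∫ t in Set.Ioc (0:ℝ) 1, gg m t)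
      = ∫ t in Set.Ioc (0:ℝ) 1, ∑' m : ℕ, gg m t := by
    refine (MeasureTheory.integral_tsum (fun m => (gg_cont m).aestronglyMeasurable) ?_).symm
    have hlin : ∀ m : ℕ, (∫⁻ t in Set.Ioc (0:ℝ) 1, ‖gg m t‖ₑ)
        = ENNReal.ofReal (12/(3*(m:ℝ)+3) - 12/(3*(m:ℝ)+4)) := by
      intro m
      have hint : IntegrableOn (gg m) (Set.Ioc (0:ℝ) 1) :=
        (gg_cont m).integrableOn_Ioc
      rw [← MeasureTheory.ofReal_integral_norm_eq_lintegral_enorm hint]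
      congr 1
      rw [← gg_integral m, intervalIntegral.integral_of_le (by norm_num : (0:ℝ) ≤ 1)]
      refine MeasureTheory.setIntegral_congr_fun measurableSet_Ioc (fun t ht => ?_)
      exact Real.norm_of_nonneg (gg_nonneg ht)
    rw [tsum_congr hlin, ← ENNReal.ofReal_tsum_of_nonneg ?_ c_summable]
    · exact ENNReal.ofReal_ne_top
    · intro m
      have hm : (0:ℝ) ≤ m := Nat.cast_nonneg m
      rw [sub_nonneg]; gcongr <;> linarith
  rw [hswap]
  have hcongr : (∫ t in Set.Ioc (0:ℝ) 1, ∑' m : ℕ, gg m t)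
      = ∫ t in Set.Ioc (0:ℝ) 1, 12*t^2/(t^2+t+1) := by
    rw [show (volume.restrict (Set.Ioc (0:ℝ) 1)) = volume.restrict (Set.Ioo (0:ℝ) 1) from
      (Measure.restrict_congr_set MeasureTheory.Ioo_ae_eq_Ioc).symm]
    exact MeasureTheory.setIntegral_congr_fun measurableSet_Ioo (fun t ht => tsum_gg ht)
  rw [hcongr, ← intervalIntegral.integral_of_le (by norm_num : (0:ℝ) ≤ 1)]
  exact integral_closed_form
end

section
/- The series ∑_{m=0}^∞ a/((m+1)(m+a)) with a = 10/3 equals (10/7)·(117/28 − √3·π/6 − (3/2)·log 3). -/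
open MeasureTheory Set Real

namespace Stmt4Aux

noncomputable def f (m : ℕ) (t : ℝ) : ℝ := (30/7) * (t^(3*m+2) - t^(3*m+9))

noncomputable def g (t : ℝ) : ℝ :=
  (10/7) * (3*t^6 + 3*t^3 + 3) - (30/7) * ((t+1)/(t^2+t+1))

noncomputable def F (t : ℝ) : ℝ :=
  (10/7) * ((3/7)*t^7 + (3/4)*t^4 + 3*t)
    - (30/7) * ((1/2) * Real.log (t^2+t+1)
        + (Real.sqrt 3)⁻¹ * Real.arctan ((2*t+1) / Real.sqrt 3))

lemma q_pos (t : ℝ) : 0 < t^2 + t + 1 := by nlinarith [sq_nonneg (t + 1/2)]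

lemma sqrt3_pos : (0:ℝ) < Real.sqrt 3 := Real.sqrt_pos.mpr (by norm_num)

lemma hasDerivAt_F (t : ℝ) : HasDerivAt F (g t) t := by
  have hq := q_pos t
  have h3 := sqrt3_pos
  have h1 : HasDerivAt (fun t : ℝ => (10/7) * ((3/7)*t^7 + (3/4)*t^4 + 3*t))
      ((10/7) * ((3/7)*(7*t^6) + (3/4)*(4*t^3) + 3)) t := by
    apply HasDerivAt.const_mul
    exact (((hasDerivAt_pow 7 t).const_mul (3/7)).add
      ((hasDerivAt_pow 4 t).const_mul (3/4))).add ((hasDerivAt_id t).const_mul 3) |>.congr_deriv (by push_cast; ring)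
  have hlog : HasDerivAt (fun t : ℝ => Real.log (t^2+t+1)) ((2*t+1)/(t^2+t+1)) t := by
    have hp : HasDerivAt (fun t : ℝ => t^2+t+1) (2*t+1) t := by
      have := ((hasDerivAt_pow 2 t).add (hasDerivAt_id t)).add_const 1
      simpa using this.congr_deriv (by push_cast; ring)
    refine ((Real.hasDerivAt_log hq.ne').comp t hp).congr_deriv ?_
    ring
  have harc : HasDerivAt (fun t : ℝ => Real.arctan ((2*t+1)/Real.sqrt 3))
      ((1/(1+((2*t+1)/Real.sqrt 3)^2)) * (2/Real.sqrt 3)) t := by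
    have hu : HasDerivAt (fun t : ℝ => (2*t+1)/Real.sqrt 3) (2/Real.sqrt 3) t := by
      have := ((hasDerivAt_id t).const_mul 2).add_const 1
      exact (this.div_const (Real.sqrt 3)).congr_deriv (by ring)
    exact (Real.hasDerivAt_arctan _).comp t hu
  have h2 : HasDerivAt (fun t : ℝ => (30/7) * ((1/2) * Real.log (t^2+t+1)
      + (Real.sqrt 3)⁻¹ * Real.arctan ((2*t+1)/Real.sqrt 3)))
      ((30/7) * ((t+1)/(t^2+t+1))) t := by
    have := ((hlog.const_mul (1/2)).add (harc.const_mul (Real.sqrt 3)⁻¹)).const_mul (30/7)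
    apply this.congr_deriv
    have hsq : Real.sqrt 3 * Real.sqrt 3 = 3 := Real.mul_self_sqrt (by norm_num)
    have hsq2 : Real.sqrt 3 ^ 2 = 3 := Real.sq_sqrt (by norm_num)
    have h4q : 1 + ((2*t+1)/Real.sqrt 3)^2 = (4*(t^2+t+1))/3 := by
      rw [div_pow, hsq2]
      field_simp
      ring
    rw [h4q]
    rw [show (1:ℝ) / ((4*(t^2+t+1))/3) = 3/(4*(t^2+t+1)) from one_div_div _ _]
    have key : (Real.sqrt 3)⁻¹ * ((3:ℝ)/(4*(t^2+t+1)) * (2/Real.sqrt 3))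
        = 1/(2*(t^2+t+1)) := by
      rw [inv_eq_one_div,
        show (1:ℝ)/Real.sqrt 3 * ((3:ℝ)/(4*(t^2+t+1)) * (2/Real.sqrt 3))
          = (3*2/(Real.sqrt 3*Real.sqrt 3))/(4*(t^2+t+1)) by ring, hsq]
      rw [show (3:ℝ)*2/3 = 2 by norm_num,
        div_eq_div_iff (by positivity) (by positivity)]
      ring
    rw [key]
    field_simp
    ring
  have := h1.sub h2
  apply this.congr_deriv
  unfold g
  ring

lemma cont_g : Continuous g := by
  unfold g
  fun_prop (disch := intro t; exact (q_pos t).ne')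

lemma arctan_sqrt3 : Real.arctan (Real.sqrt 3) = Real.pi / 3 := by
  have ht : Real.tan (Real.pi/3) = Real.sqrt 3 := by
    rw [Real.tan_eq_sin_div_cos, Real.sin_pi_div_three, Real.cos_pi_div_three]
    ring
  rw [← ht]
  exact Real.arctan_tan (by linarith [Real.pi_pos]) (by linarith [Real.pi_pos])

lemma arctan_inv_sqrt3 : Real.arctan (1 / Real.sqrt 3) = Real.pi / 6 := by
  have ht : Real.tan (Real.pi/6) = 1 / Real.sqrt 3 := by
    rw [Real.tan_eq_sin_div_cos, Real.sin_pi_div_six, Real.cos_pi_div_six]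
    rw [div_div_div_eq, div_mul_eq_div_div]
    norm_num [one_div]
  rw [← ht]
  exact Real.arctan_tan (by linarith [Real.pi_pos]) (by linarith [Real.pi_pos])

lemma integral_g : ∫ t in (0:ℝ)..1, g t
    = (10/7) * (117/28 - Real.sqrt 3 * Real.pi / 6 - (3/2) * Real.log 3) := by
  rw [intervalIntegral.integral_eq_sub_of_hasDerivAt
    (fun t _ => hasDerivAt_F t) (cont_g.intervalIntegrable 0 1)]
  have h3 := sqrt3_pos
  have e1 : ((2*(1:ℝ)+1) / Real.sqrt 3) = Real.sqrt 3 := by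
    rw [show (2*(1:ℝ)+1) = 3 by norm_num, Real.div_sqrt]
  have e0 : ((2*(0:ℝ)+1) / Real.sqrt 3) = 1 / Real.sqrt 3 := by norm_num
  unfold F
  rw [e1, e0, arctan_sqrt3, arctan_inv_sqrt3]
  have hlog0 : Real.log ((0:ℝ)^2+0+1) = 0 := by norm_num
  have hlog1 : ((1:ℝ)^2+1+1) = 3 := by norm_num
  rw [hlog1, hlog0]
  have hs : (Real.sqrt 3)⁻¹ = Real.sqrt 3 / 3 := by
    rw [inv_eq_one_div, div_eq_div_iff h3.ne' (by norm_num : (3:ℝ) ≠ 0), one_mul]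
    exact (Real.mul_self_sqrt (by norm_num)).symm
  rw [hs]
  ring

lemma term_eq (m : ℕ) : (10/3 : ℝ) / ((m + 1) * (m + (10/3 : ℝ)))
    = ∫ t in Ioo (0:ℝ) 1, f m t := by
  rw [← MeasureTheory.integral_Ioc_eq_integral_Ioo,
    ← intervalIntegral.integral_of_le (by norm_num : (0:ℝ) ≤ 1)]
  unfold f
  rw [intervalIntegral.integral_const_mul,
    intervalIntegral.integral_sub (intervalIntegral.intervalIntegrable_pow _)
      (intervalIntegral.intervalIntegrable_pow _),
    integral_pow, integral_pow]
  have h1 : (m:ℝ) + 1 > 0 := by positivity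
  have h2 : (m:ℝ) + 10/3 > 0 := by positivity
  have h3 : (3*(m:ℝ)+2+1) > 0 := by positivity
  have h4 : (3*(m:ℝ)+9+1) > 0 := by positivity
  push_cast
  rw [one_pow, one_pow, zero_pow (by omega : 3*m+2+1 ≠ 0), zero_pow (by omega : 3*m+9+1 ≠ 0)]
  field_simp
  ring

lemma f_nonneg {m : ℕ} {t : ℝ} (ht : t ∈ Ioo (0:ℝ) 1) : 0 ≤ f m t := by
  have h1 : t^(3*m+9) ≤ t^(3*m+2) :=
    pow_le_pow_of_le_one ht.1.le ht.2.le (by omega)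
  unfold f; nlinarith

lemma integrable_f (m : ℕ) : Integrable (f m) (volume.restrict (Ioo (0:ℝ) 1)) := by
  have : Continuous (f m) := by unfold f; fun_prop
  exact ((this.integrableOn_Icc (a := (0:ℝ)) (b := 1)).mono_set Ioo_subset_Icc_self)

lemma summable_norm : Summable (fun m : ℕ => ∫ t in Ioo (0:ℝ) 1, ‖f m t‖) := by
  have heq : ∀ m : ℕ, (∫ t in Ioo (0:ℝ) 1, ‖f m t‖)
      = (10/3 : ℝ) / ((m + 1) * (m + (10/3 : ℝ))) := by
    intro m
    rw [term_eq m]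
    exact MeasureTheory.setIntegral_congr_fun measurableSet_Ioo
      (fun t ht => Real.norm_of_nonneg (f_nonneg ht))
  rw [funext heq]
  have hbig : Summable (fun m : ℕ => (10/3 : ℝ) * (1/((m:ℝ)+1)^2)) := by
    apply Summable.mul_left
    have := (summable_nat_add_iff (f := fun n : ℕ => 1/((n:ℝ))^2) 1).mpr
      ((Real.summable_one_div_nat_pow).mpr (by norm_num))
    simpa using this
  apply Summable.of_nonneg_of_le _ _ hbig
  · intro m
    have h1 : (0:ℝ) < (m:ℝ)+1 := by positivity
    have h2 : (0:ℝ) < (m:ℝ)+10/3 := by positivity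
    positivity
  · intro m
    have h1 : (0:ℝ) < (m:ℝ)+1 := by positivity
    have h2 : (0:ℝ) < (m:ℝ)+10/3 := by positivity
    have hrw : (10/3 : ℝ) * (1/((m:ℝ)+1)^2) = (10/3) / (((m:ℝ)+1)*((m:ℝ)+1)) := by
      field_simp
    rw [hrw]
    gcongr <;> nlinarith

lemma hasSum_pointwise {t : ℝ} (ht : t ∈ Ioo (0:ℝ) 1) :
    HasSum (fun m : ℕ => f m t) (g t) := by
  have ht3 : t^3 < 1 := pow_lt_one₀ ht.1.le ht.2 (by norm_num)
  have ht3' : (0:ℝ) ≤ t^3 := pow_nonneg ht.1.le 3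
  have hgeo := hasSum_geometric_of_lt_one ht3' ht3
  have := hgeo.mul_left ((30/7) * (t^2 - t^9))
  have hfe : (fun m : ℕ => (30/7) * (t^2 - t^9) * (t^3)^m) = fun m => f m t := by
    funext m
    unfold f
    rw [pow_add, pow_add, pow_mul]
    try ring
  rw [hfe] at this
  convert this using 1
  · exact rfl
  have hne : (1 - t^3) ≠ 0 := by nlinarith
  have hq : (t^2+t+1) ≠ 0 := (q_pos t).ne'
  unfold g
  rw [eq_mul_inv_iff_mul_eq₀ hne, div_eq_mul_inv (t+1)]
  have hqi : (t^2+t+1) * (t^2+t+1)⁻¹ = 1 := mul_inv_cancel₀ hq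
  linear_combination (-(30/7) * (1 - t^2)) * hqi

end Stmt4Aux

theorem stmt_4 :
    (∑' m : ℕ, (10/3 : ℝ) / ((m + 1) * (m + (10/3 : ℝ)))) = (10/7) * (117/28 - Real.sqrt 3 * Real.pi / 6 - (3/2) * Real.log 3) := by
  open Stmt4Aux in
  calc (∑' m : ℕ, (10/3 : ℝ) / ((m + 1) * (m + (10/3 : ℝ))))
      = ∑' m : ℕ, ∫ t in Ioo (0:ℝ) 1, f m t := tsum_congr term_eq
    _ = ∫ t in Ioo (0:ℝ) 1, ∑' m : ℕ, f m t :=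
        integral_tsum_of_summable_integral_norm integrable_f summable_norm
    _ = ∫ t in Ioo (0:ℝ) 1, g t :=
        setIntegral_congr_fun measurableSet_Ioo
          (fun t ht => (hasSum_pointwise ht).tsum_eq)
    _ = ∫ t in (0:ℝ)..1, g t := by
        rw [intervalIntegral.integral_of_le (by norm_num : (0:ℝ) ≤ 1),
          MeasureTheory.integral_Ioc_eq_integral_Ioo]
    _ = (10/7) * (117/28 - Real.sqrt 3 * Real.pi / 6 - (3/2) * Real.log 3) := integral_g
end

section
/- The series ∑_{m=0}^∞ a/((m+1)(m+a)) with a = 1/6 equals √3·π/10 + (3/10)·log 3 + (2/5)·log 2. -/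
open Real MeasureTheory Set

noncomputable def myF (x : ℝ) : ℝ :=
  (1/3) * Real.log (x+1) + (1/4) * Real.log (x^2+x+1) + (1/12) * Real.log (x^2-x+1)
  + (1/(2*Real.sqrt 3)) * Real.arctan ((2*x+1)/Real.sqrt 3)
  + (Real.sqrt 3/6) * Real.arctan ((2*x-1)/Real.sqrt 3)

noncomputable def myh (x : ℝ) : ℝ :=
  (x^4+x^3+x^2+x+1)/(x^5+x^4+x^3+x^2+x+1)

lemma hderiv {x : ℝ} (hx : x ∈ Set.uIcc (0:ℝ) 1) : HasDerivAt myF (myh x) x := by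
  rw [Set.uIcc_of_le (by norm_num)] at hx
  obtain ⟨hx0, hx1⟩ := hx
  have s3 : Real.sqrt 3 > 0 := Real.sqrt_pos.2 (by norm_num)
  have s3' : Real.sqrt 3 ^ 2 = 3 := Real.sq_sqrt (by norm_num)
  have d1 : (x:ℝ) + 1 > 0 := by linarith
  have d2 : x^2 + x + 1 > 0 := by nlinarith
  have d3 : x^2 - x + 1 > 0 := by nlinarith
  have r1 : 1+((2*x+1)/Real.sqrt 3)^2 = 4*(x^2+x+1)/3 := by rw [div_pow, s3']; ring
  have r2 : 1+((2*x-1)/Real.sqrt 3)^2 = 4*(x^2-x+1)/3 := by rw [div_pow, s3']; ring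
  have h1 : HasDerivAt (fun x : ℝ => Real.log (x+1)) (1/(x+1)) x := by
    have := ((hasDerivAt_id x).add_const 1).log (by positivity)
    simpa using this
  have h2 : HasDerivAt (fun x : ℝ => Real.log (x^2+x+1)) ((2*x+1)/(x^2+x+1)) x := by
    have hp : HasDerivAt (fun x : ℝ => x^2+x+1) (2*x+1) x := by
      have := (((hasDerivAt_pow 2 x).add (hasDerivAt_id x)).add_const 1)
      simpa using this
    simpa using hp.log (by positivity)
  have h3 : HasDerivAt (fun x : ℝ => Real.log (x^2-x+1)) ((2*x-1)/(x^2-x+1)) x := by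
    have hp : HasDerivAt (fun x : ℝ => x^2-x+1) (2*x-1) x := by
      have := (((hasDerivAt_pow 2 x).sub (hasDerivAt_id x)).add_const 1)
      simpa using this
    simpa using hp.log (by positivity)
  have h4 : HasDerivAt (fun x : ℝ => Real.arctan ((2*x+1)/Real.sqrt 3))
      ((1/(1+((2*x+1)/Real.sqrt 3)^2)) * (2/Real.sqrt 3)) x := by
    have hu : HasDerivAt (fun x : ℝ => (2*x+1)/Real.sqrt 3) (2/Real.sqrt 3) x := by
      have := (((hasDerivAt_id x).const_mul 2).add_const 1).div_const (Real.sqrt 3)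
      simpa using this
    exact (Real.hasDerivAt_arctan _).comp x hu
  have h5 : HasDerivAt (fun x : ℝ => Real.arctan ((2*x-1)/Real.sqrt 3))
      ((1/(1+((2*x-1)/Real.sqrt 3)^2)) * (2/Real.sqrt 3)) x := by
    have hu : HasDerivAt (fun x : ℝ => (2*x-1)/Real.sqrt 3) (2/Real.sqrt 3) x := by
      have := (((hasDerivAt_id x).const_mul 2).sub_const 1).div_const (Real.sqrt 3)
      simpa using this
    exact (Real.hasDerivAt_arctan _).comp x hu
  have H := ((((h1.const_mul (1/3:ℝ)).add (h2.const_mul (1/4:ℝ))).add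
      (h3.const_mul (1/12:ℝ))).add (h4.const_mul (1/(2*Real.sqrt 3)))).add
      (h5.const_mul (Real.sqrt 3/6))
  convert H using 1
  · exact rfl
  · exact rfl
  · exact rfl
  rw [r1, r2]
  have e4 : 1/(2*Real.sqrt 3) * (1/(4*(x^2+x+1)/3) * (2/Real.sqrt 3)) = 1/(4*(x^2+x+1)) := by
    field_simp
    ring_nf
    rw [s3']
  have e5 : Real.sqrt 3/6 * (1/(4*(x^2-x+1)/3) * (2/Real.sqrt 3)) = 1/(4*(x^2-x+1)) := by
    field_simp
    ring_nf
  rw [e4, e5, myh]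
  have d4 : x^5+x^4+x^3+x^2+x+1 > 0 := by positivity
  field_simp [d2.ne', d3.ne', d4.ne', show x*(x-1)+1 ≠ 0 by nlinarith]
  ring

noncomputable def myg (m : ℕ) (x : ℝ) : ℝ := x^(6*m) - x^(6*m+5)

lemma t_eval (m : ℕ) : ∫ x in Set.Ioc (0:ℝ) 1, myg m x
    = 1/(6*(m:ℝ)+1) - 1/(6*(m:ℝ)+6) := by
  rw [← intervalIntegral.integral_of_le zero_le_one]
  unfold myg
  rw [intervalIntegral.integral_sub (intervalIntegral.intervalIntegrable_pow _) (intervalIntegral.intervalIntegrable_pow _),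
    integral_pow, integral_pow]
  push_cast
  norm_num
  ring

lemma t_nonneg (m : ℕ) {x : ℝ} (hx : x ∈ Set.Ioc (0:ℝ) 1) : 0 ≤ myg m x := by
  unfold myg
  have := pow_le_pow_of_le_one hx.1.le hx.2 (Nat.le_add_right (6*m) 5)
  linarith

lemma t_summable : Summable (fun m : ℕ => 1/(6*(m:ℝ)+1) - 1/(6*(m:ℝ)+6)) := by
  have hs : Summable (fun m : ℕ => 1/((m:ℝ)+1)^2) := by
    have := (summable_nat_add_iff (f := fun n : ℕ => 1/(n:ℝ)^2) 1).2
      (Real.summable_one_div_nat_pow.2 one_lt_two)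
    refine this.congr fun n => by push_cast; ring
  apply hs.of_nonneg_of_le
  · intro m
    have h1 : (0:ℝ) < 6*(m:ℝ)+1 := by positivity
    have h2 : (0:ℝ) < 6*(m:ℝ)+6 := by positivity
    rw [sub_nonneg, div_le_div_iff₀ h2 h1]
    linarith
  · intro m
    have h1 : (0:ℝ) < 6*(m:ℝ)+1 := by positivity
    have h2 : (0:ℝ) < 6*(m:ℝ)+6 := by positivity
    have h3 : (0:ℝ) < ((m:ℝ)+1)^2 := by positivity
    rw [div_sub_div _ _ (ne_of_gt h1) (ne_of_gt h2), div_le_div_iff₀ (by positivity) h3]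
    have : (0:ℝ) ≤ (m:ℝ) := Nat.cast_nonneg m
    nlinarith

lemma tsum_g {x : ℝ} (hx : x ∈ Set.Ioo (0:ℝ) 1) : (∑' m : ℕ, myg m x) = myh x := by
  obtain ⟨hx0, hx1⟩ := hx
  have hx6 : x^6 < 1 := pow_lt_one₀ hx0.le hx1 (by norm_num)
  have key : ∀ m : ℕ, myg m x = (x^6)^m * (1-x^5) := by
    intro m; unfold myg; rw [← pow_mul, pow_add]; ring
  rw [tsum_congr key, tsum_mul_right, tsum_geometric_of_lt_one (by positivity) hx6]
  unfold myh
  have d1 : (1:ℝ) - x^6 > 0 := by linarith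
  have d2 : x^5+x^4+x^3+x^2+x+1 > 0 := by positivity
  field_simp
  ring

lemma sum_to_integral :
    (∑' m : ℕ, (1/6 : ℝ) / ((m + 1) * (m + (1/6 : ℝ)))) = (6/5) * ∫ x in (0:ℝ)..1, myh x := by
  have term : ∀ m : ℕ, (1/6 : ℝ) / ((m + 1) * (m + (1/6 : ℝ)))
      = (6/5) * (1/(6*(m:ℝ)+1) - 1/(6*(m:ℝ)+6)) := by
    intro m
    have h0 : ((m:ℝ)+1) > 0 := by positivity
    have h1 : (6*(m:ℝ)+1) > 0 := by positivity
    have h2 : ((m:ℝ)+1/6) > 0 := by positivity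
    field_simp
    ring
  rw [tsum_congr term, tsum_mul_left]
  congr 1
  rw [intervalIntegral.integral_of_le zero_le_one]
  have hint : ∀ m : ℕ, Integrable (myg m) (volume.restrict (Set.Ioc (0:ℝ) 1)) := by
    intro m
    exact ((continuous_pow (6*m)).sub (continuous_pow (6*m+5))).integrableOn_Ioc
  have hnorm : ∀ m : ℕ, (∫ x in Set.Ioc (0:ℝ) 1, ‖myg m x‖)
      = 1/(6*(m:ℝ)+1) - 1/(6*(m:ℝ)+6) := by
    intro m
    rw [← t_eval m]
    apply setIntegral_congr_fun measurableSet_Ioc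
    intro x hx
    exact Real.norm_of_nonneg (t_nonneg m hx)
  have hsum : Summable (fun m : ℕ => ∫ x in Set.Ioc (0:ℝ) 1, ‖myg m x‖) := by
    rw [funext hnorm]; exact t_summable
  have := MeasureTheory.integral_tsum_of_summable_integral_norm hint hsum
  calc ∑' m : ℕ, (1/(6*(m:ℝ)+1) - 1/(6*(m:ℝ)+6))
      = ∑' m : ℕ, ∫ x in Set.Ioc (0:ℝ) 1, myg m x := by
        exact tsum_congr fun m => (t_eval m).symm
    _ = ∫ x in Set.Ioc (0:ℝ) 1, ∑' m : ℕ, myg m x := this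
    _ = ∫ x in Set.Ioo (0:ℝ) 1, ∑' m : ℕ, myg m x := integral_Ioc_eq_integral_Ioo
    _ = ∫ x in Set.Ioo (0:ℝ) 1, myh x := by
        exact setIntegral_congr_fun measurableSet_Ioo fun x hx => tsum_g hx
    _ = ∫ x in Set.Ioc (0:ℝ) 1, myh x := integral_Ioc_eq_integral_Ioo.symm

lemma hcont : ContinuousOn myh (Set.uIcc (0:ℝ) 1) := by
  apply ContinuousOn.div (by fun_prop) (by fun_prop)
  intro x hx
  rw [Set.uIcc_of_le (by norm_num)] at hx
  have : (0:ℝ) ≤ x := hx.1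
  positivity

lemma arctan_sqrt3 : Real.arctan (Real.sqrt 3) = Real.pi / 3 := by
  rw [← Real.tan_pi_div_three, Real.arctan_tan] <;> linarith [Real.pi_pos]

lemma arctan_inv_sqrt3 : Real.arctan (1 / Real.sqrt 3) = Real.pi / 6 := by
  rw [← Real.tan_pi_div_six, Real.arctan_tan] <;> linarith [Real.pi_pos]

lemma integral_myh : ∫ x in (0:ℝ)..1, myh x
    = (1/3) * Real.log 2 + (1/4) * Real.log 3 + Real.sqrt 3 * Real.pi / 12 := by
  rw [intervalIntegral.integral_eq_sub_of_hasDerivAt (fun x hx => hderiv hx)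
    (hcont.intervalIntegrable)]
  have s3 : Real.sqrt 3 > 0 := Real.sqrt_pos.2 (by norm_num)
  have s3' : Real.sqrt 3 ^ 2 = 3 := Real.sq_sqrt (by norm_num)
  have e1 : ((2:ℝ)*1+1)/Real.sqrt 3 = Real.sqrt 3 := by
    rw [div_eq_iff (ne_of_gt s3)]; nlinarith
  have e2 : ((2:ℝ)*1-1)/Real.sqrt 3 = 1/Real.sqrt 3 := by norm_num
  have e3 : ((2:ℝ)*0+1)/Real.sqrt 3 = 1/Real.sqrt 3 := by norm_num
  have e4 : ((2:ℝ)*0-1)/Real.sqrt 3 = -(1/Real.sqrt 3) := by ring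
  rw [myF, myF, e1, e2, e3, e4, Real.arctan_neg, arctan_sqrt3, arctan_inv_sqrt3]
  norm_num [Real.log_one]
  field_simp
  ring_nf
  rw [s3']
  ring

theorem stmt_5 :
    (∑' m : ℕ, (1/6 : ℝ) / ((m + 1) * (m + (1/6 : ℝ)))) = Real.sqrt 3 * Real.pi / 10 + (3/10) * Real.log 3 + (2/5) * Real.log 2 := by
  rw [sum_to_integral, integral_myh]
  ring
end

section
/- The series ∑_{m=0}^∞ a/((m+1)(m+a)) with a = 7/5 equals (7/2)·(5/2 − log 10 − ((√5−1)/√(10+2√5))·π/2 + (1/2)·(√5·log((√5+1)/2) − log(√5/4))). -/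
open Real MeasureTheory Set

noncomputable section T
private def da : ℝ := Real.sqrt ((5 - Real.sqrt 5)/2)
private def db : ℝ := Real.sqrt ((5 + Real.sqrt 5)/2)
private lemma hs : Real.sqrt 5 * Real.sqrt 5 = 5 := Real.mul_self_sqrt (by norm_num)
private lemma hs_pos : 0 < Real.sqrt 5 := Real.sqrt_pos.2 (by norm_num)
private lemma hs_lt : Real.sqrt 5 < 3 := by nlinarith [hs, hs_pos]
private lemma hs_gt : 2 < Real.sqrt 5 := by nlinarith [hs, hs_pos]
private lemma hda_sq : da * da = (5 - Real.sqrt 5)/2 :=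
  Real.mul_self_sqrt (by nlinarith [hs_lt, hs_pos])
private lemma hdb_sq : db * db = (5 + Real.sqrt 5)/2 :=
  Real.mul_self_sqrt (by nlinarith [hs_pos])
private lemma hda_pos : 0 < da := Real.sqrt_pos.2 (by nlinarith [hs_lt])
private lemma hdb_pos : 0 < db := Real.sqrt_pos.2 (by nlinarith [hs_pos])
private lemma hdadb : da * db = Real.sqrt 5 := by
  rw [da, db, ← Real.sqrt_mul (by nlinarith [hs_lt, hs_pos])]
  rw [show ((5 - Real.sqrt 5)/2) * ((5 + Real.sqrt 5)/2) = 5 by nlinarith [hs]]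
private lemma hcos1 : Real.cos (π/5) = (1 + Real.sqrt 5)/4 := Real.cos_pi_div_five
private lemma hcos2 : Real.cos (2*π/5) = (Real.sqrt 5 - 1)/4 := by
  have h : (2:ℝ)*π/5 = 2*(π/5) := by ring
  rw [h, Real.cos_two_mul, hcos1]; nlinarith [hs]
private lemma sqrt_quarter (x : ℝ) (hx : 0 ≤ x) : Real.sqrt (x/4) = Real.sqrt x / 2 := by
  rw [Real.sqrt_div hx, show Real.sqrt 4 = 2 by
    rw [show (4:ℝ) = 2^2 by norm_num, Real.sqrt_sq (by norm_num)]]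
private lemma hsin1 : Real.sin (π/5) = da/2 := by
  rw [Real.sin_eq_sqrt_one_sub_cos_sq (by positivity) (by nlinarith [pi_pos]), hcos1]
  rw [show 1 - ((1+Real.sqrt 5)/4)^2 = ((5-Real.sqrt 5)/2)/4 by nlinarith [hs],
    sqrt_quarter _ (by nlinarith [hs_lt])]; rfl
private lemma hsin2 : Real.sin (2*π/5) = db/2 := by
  rw [Real.sin_eq_sqrt_one_sub_cos_sq (by positivity) (by nlinarith [pi_pos]), hcos2]
  rw [show 1 - ((Real.sqrt 5 - 1)/4)^2 = ((5+Real.sqrt 5)/2)/4 by nlinarith [hs],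
    sqrt_quarter _ (by nlinarith [hs_pos])]; rfl

-- arctan evaluations
private lemma harc1 : Real.arctan (((1+Real.sqrt 5)/2)/da) = 3*π/10 := by
  have h1 : ((1+Real.sqrt 5)/2)/da = Real.tan (3*π/10) := by
    rw [show (3:ℝ)*π/10 = π/2 - π/5 by ring, Real.tan_pi_div_two_sub,
      Real.tan_eq_sin_div_cos, hsin1, hcos1]
    rw [inv_div]
    ring
  rw [h1, Real.arctan_tan (by nlinarith [pi_pos]) (by nlinarith [pi_pos])]
private lemma harc2 : Real.arctan ((2+(1+Real.sqrt 5)/2)/da) = 2*π/5 := by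
  have h1 : (2+(1+Real.sqrt 5)/2)/da = Real.tan (2*π/5) := by
    rw [Real.tan_eq_sin_div_cos, hsin2, hcos2]
    rw [div_eq_div_iff hda_pos.ne' (by nlinarith [hs_gt] : ((Real.sqrt 5 - 1)/4 : ℝ) ≠ 0)]
    nlinarith [hs, hdadb]
  rw [h1, Real.arctan_tan (by nlinarith [pi_pos]) (by nlinarith [pi_pos])]
private lemma harc3 : Real.arctan (((1-Real.sqrt 5)/2)/db) = -(π/10) := by
  have h1 : ((1-Real.sqrt 5)/2)/db = Real.tan (-(π/10)) := by
    rw [Real.tan_neg, show (π:ℝ)/10 = π/2 - 2*π/5 by ring, Real.tan_pi_div_two_sub,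
      Real.tan_eq_sin_div_cos, hsin2, hcos2, inv_div]
    field_simp
    ring
  rw [h1, Real.arctan_tan (by nlinarith [pi_pos]) (by nlinarith [pi_pos])]
private lemma harc4 : Real.arctan ((2+(1-Real.sqrt 5)/2)/db) = π/5 := by
  have h1 : (2+(1-Real.sqrt 5)/2)/db = Real.tan (π/5) := by
    rw [Real.tan_eq_sin_div_cos, hsin1, hcos1]
    rw [div_eq_div_iff hdb_pos.ne' (by positivity : ((1+Real.sqrt 5)/4 : ℝ) ≠ 0)]
    nlinarith [hs, hdadb]
  rw [h1, Real.arctan_tan (by nlinarith [pi_pos]) (by nlinarith [pi_pos])]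

-- log identity
private lemma hlog : ((5-Real.sqrt 5)/4) * Real.log ((5+Real.sqrt 5)/2)
    + ((5+Real.sqrt 5)/4) * Real.log ((5-Real.sqrt 5)/2)
    = Real.log 10 - (1/2)*(Real.sqrt 5 * Real.log ((Real.sqrt 5+1)/2) - Real.log (Real.sqrt 5/4)) := by
  have h2 : Real.log ((5+Real.sqrt 5)/2) = Real.log (Real.sqrt 5) + Real.log ((Real.sqrt 5+1)/2) := by
    rw [← Real.log_mul hs_pos.ne' (ne_of_gt (by positivity : (0:ℝ) < (Real.sqrt 5+1)/2))]
    congr 1; nlinarith [hs]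
  have h3 : Real.log ((5-Real.sqrt 5)/2) = Real.log (Real.sqrt 5) - Real.log ((Real.sqrt 5+1)/2) := by
    rw [← Real.log_div hs_pos.ne' (ne_of_gt (by positivity : (0:ℝ) < (Real.sqrt 5+1)/2))]
    congr 1
    rw [div_div_eq_mul_div, eq_div_iff (by positivity : (0:ℝ) < Real.sqrt 5 + 1).ne']
    nlinarith [hs]
  have h4 : Real.log 10 = Real.log 2 + 2 * Real.log (Real.sqrt 5) := by
    rw [show (10:ℝ) = 2 * (Real.sqrt 5 * Real.sqrt 5) by nlinarith [hs],
      Real.log_mul (by norm_num) (by positivity), Real.log_mul hs_pos.ne' hs_pos.ne']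
    ring
  have h5 : Real.log (Real.sqrt 5/4) = Real.log (Real.sqrt 5) - 2 * Real.log 2 := by
    rw [Real.log_div hs_pos.ne' (by norm_num), show (4:ℝ) = 2*2 by norm_num,
      Real.log_mul (by norm_num) (by norm_num)]
    ring
  rw [h2, h3, h4, h5]; ring

-- pi identity
private lemma hpi : (Real.sqrt 5/da)*(π/10) - (Real.sqrt 5/db)*(3*π/10)
    = -(((Real.sqrt 5 - 1) / Real.sqrt (10 + 2 * Real.sqrt 5)) * π / 2) := by
  have e1 : Real.sqrt 5/da = db := by
    rw [div_eq_iff hda_pos.ne', mul_comm]; exact hdadb.symm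
  have e2 : Real.sqrt 5/db = da := by
    rw [div_eq_iff hdb_pos.ne']; exact hdadb.symm
  have e3 : Real.sqrt (10 + 2*Real.sqrt 5) = 2 * db := by
    rw [show (10 + 2*Real.sqrt 5 : ℝ) = 4 * ((5+Real.sqrt 5)/2) by ring,
      Real.sqrt_mul (by norm_num), show Real.sqrt 4 = 2 by
        rw [show (4:ℝ) = 2^2 by norm_num, Real.sqrt_sq (by norm_num)]]
    rfl
  rw [e1, e2, e3]
  have h4 : db ≠ 0 := hdb_pos.ne'
  field_simp
  linear_combination 4*hdb_sq - 12*hdadb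
end T

noncomputable section T2
open intervalIntegral

private def FF (t : ℝ) : ℝ :=
  (5/2)*t^2 - ( ((5 - Real.sqrt 5)/4) * Real.log (t^2 + ((1+Real.sqrt 5)/2)*t + 1)
    + ((5 + Real.sqrt 5)/4) * Real.log (t^2 + ((1-Real.sqrt 5)/2)*t + 1)
    - (Real.sqrt 5 / da) * Real.arctan ((2*t + (1+Real.sqrt 5)/2)/da)
    + (Real.sqrt 5 / db) * Real.arctan ((2*t + (1-Real.sqrt 5)/2)/db) )

private def g (t : ℝ) : ℝ := 5*t^4*(1+t)/(t^4+t^3+t^2+t+1)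

private lemma hu_pos (t : ℝ) : 0 < t^2 + ((1+Real.sqrt 5)/2)*t + 1 := by
  nlinarith [sq_nonneg (2*t + (1+Real.sqrt 5)/2), hs, hs_lt]

private lemma hv_pos (t : ℝ) : 0 < t^2 + ((1-Real.sqrt 5)/2)*t + 1 := by
  nlinarith [sq_nonneg (2*t + (1-Real.sqrt 5)/2), hs, hs_lt, hs_pos]

private lemma hQ_pos (t : ℝ) : 0 < t^4+t^3+t^2+t+1 := by
  nlinarith [sq_nonneg (t^2+t/2), sq_nonneg (t+2/3), sq_nonneg t]

set_option maxHeartbeats 1000000 in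
private lemma hderiv_s9 (t : ℝ) : HasDerivAt FF (g t) t := by
  have hu := hu_pos t; have hv := hv_pos t
  have hda0 : da ≠ 0 := hda_pos.ne'
  have hdb0 : db ≠ 0 := hdb_pos.ne'
  have hda_sq2 : da^2 = (5-Real.sqrt 5)/2 := by rw [sq]; exact hda_sq
  have hdb_sq2 : db^2 = (5+Real.sqrt 5)/2 := by rw [sq]; exact hdb_sq
  have d0 : HasDerivAt (fun x : ℝ => (5/2)*x^2) ((5/2)*(2*t^1)) t :=
    (hasDerivAt_pow 2 t).const_mul (5/2)
  have d1 : HasDerivAt (fun x : ℝ => x^2 + ((1+Real.sqrt 5)/2)*x + 1)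
      (2*t + (1+Real.sqrt 5)/2) t := by
    have := ((hasDerivAt_pow 2 t).add ((hasDerivAt_id t).const_mul ((1+Real.sqrt 5)/2))).add_const 1
    exact this.congr_deriv (by norm_num)
  have d2 : HasDerivAt (fun x : ℝ => x^2 + ((1-Real.sqrt 5)/2)*x + 1)
      (2*t + (1-Real.sqrt 5)/2) t := by
    have := ((hasDerivAt_pow 2 t).add ((hasDerivAt_id t).const_mul ((1-Real.sqrt 5)/2))).add_const 1
    exact this.congr_deriv (by norm_num)
  have dlog1 := (d1.log hu.ne')
  have dlog2 := (d2.log hv.ne')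
  have inner1 : HasDerivAt (fun x : ℝ => (2*x + (1+Real.sqrt 5)/2)/da) (2/da) t := by
    have := (((hasDerivAt_id t).const_mul 2).add_const ((1+Real.sqrt 5)/2)).div_const da
    exact this.congr_deriv (by ring)
  have inner2 : HasDerivAt (fun x : ℝ => (2*x + (1-Real.sqrt 5)/2)/db) (2/db) t := by
    have := (((hasDerivAt_id t).const_mul 2).add_const ((1-Real.sqrt 5)/2)).div_const db
    exact this.congr_deriv (by ring)
  have darc1 : HasDerivAt (fun x : ℝ => Real.arctan ((2*x + (1+Real.sqrt 5)/2)/da))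
      (1 / (1 + ((2*t + (1+Real.sqrt 5)/2)/da) ^ 2) * (2/da)) t :=
    by exact (Real.hasDerivAt_arctan ((2*t + (1+Real.sqrt 5)/2)/da)).comp t inner1
  have darc2 : HasDerivAt (fun x : ℝ => Real.arctan ((2*x + (1-Real.sqrt 5)/2)/db))
      (1 / (1 + ((2*t + (1-Real.sqrt 5)/2)/db) ^ 2) * (2/db)) t :=
    by exact (Real.hasDerivAt_arctan ((2*t + (1-Real.sqrt 5)/2)/db)).comp t inner2
  have total := d0.sub ((((dlog1.const_mul ((5 - Real.sqrt 5)/4)).add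
      (dlog2.const_mul ((5 + Real.sqrt 5)/4))).sub
      (darc1.const_mul (Real.sqrt 5 / da))).add (darc2.const_mul (Real.sqrt 5 / db)))
  refine total.congr_deriv (Eq.symm ?_)
  have key1 : da^2 + (2*t + (1+Real.sqrt 5)/2)^2 = 4*(t^2 + ((1+Real.sqrt 5)/2)*t + 1) := by
    linear_combination hda_sq2 + (1/4)*hs
  have key2 : db^2 + (2*t + (1-Real.sqrt 5)/2)^2 = 4*(t^2 + ((1-Real.sqrt 5)/2)*t + 1) := by
    linear_combination hdb_sq2 + (1/4)*hs
  have e1 : 1 + ((2*t + (1+Real.sqrt 5)/2)/da)^2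
      = (4*(t^2 + ((1+Real.sqrt 5)/2)*t + 1))/da^2 := by
    rw [← key1]; field_simp
  have e2 : 1 + ((2*t + (1-Real.sqrt 5)/2)/db)^2
      = (4*(t^2 + ((1-Real.sqrt 5)/2)*t + 1))/db^2 := by
    rw [← key2]; field_simp
  have hu0 : (t^2 + ((1+Real.sqrt 5)/2)*t + 1) ≠ 0 := hu.ne'
  have hv0 : (t^2 + ((1-Real.sqrt 5)/2)*t + 1) ≠ 0 := hv.ne'
  have g1 : da^2*(1+((2*t + (1+Real.sqrt 5)/2)/da)^2) = 4*(t^2 + ((1+Real.sqrt 5)/2)*t + 1) := by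
    rw [← key1]; field_simp
  have g2 : db^2*(1+((2*t + (1-Real.sqrt 5)/2)/db)^2) = 4*(t^2 + ((1-Real.sqrt 5)/2)*t + 1) := by
    rw [← key2]; field_simp
  have aux : ∀ (x c : ℝ), Real.sqrt 5/x * (1/c * (2/x)) = Real.sqrt 5*2/(x^2*c) := by
    intro x c; ring
  have f1 : Real.sqrt 5/da * (1/(1+((2*t + (1+Real.sqrt 5)/2)/da)^2) * (2/da))
      = Real.sqrt 5/(2*(t^2 + ((1+Real.sqrt 5)/2)*t + 1)) := by
    rw [aux, g1,
      div_eq_div_iff (by positivity : ((4:ℝ)*(t^2 + ((1+Real.sqrt 5)/2)*t + 1)) ≠ 0)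
        (by positivity : ((2:ℝ)*(t^2 + ((1+Real.sqrt 5)/2)*t + 1)) ≠ 0)]
    ring
  have f2 : Real.sqrt 5/db * (1/(1+((2*t + (1-Real.sqrt 5)/2)/db)^2) * (2/db))
      = Real.sqrt 5/(2*(t^2 + ((1-Real.sqrt 5)/2)*t + 1)) := by
    rw [aux, g2,
      div_eq_div_iff (mul_ne_zero (by norm_num) hv.ne') (mul_ne_zero (by norm_num) hv.ne')]
    ring
  rw [f1, f2, g]
  rw [show t^4+t^3+t^2+t+1
      = (t^2 + ((1+Real.sqrt 5)/2)*t + 1) * (t^2 + ((1-Real.sqrt 5)/2)*t + 1) by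
    linear_combination (t^2/4)*hs]
  have gen : ∀ (u v : ℝ), u ≠ 0 → v ≠ 0 → u = t^2+((1+Real.sqrt 5)/2)*t+1 →
      v = t^2+((1-Real.sqrt 5)/2)*t+1 →
      5*t^4*(1+t)/(u*v) = 5/2*(2*t^1) - ((5 - Real.sqrt 5)/4 * ((2*t+(1+Real.sqrt 5)/2)/u)
        + (5 + Real.sqrt 5)/4 * ((2*t+(1-Real.sqrt 5)/2)/v)
        - Real.sqrt 5/(2*u) + Real.sqrt 5/(2*v)) := by
    intro u v hu0' hv0' huu hvv
    field_simp
    subst huu hvv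
    linear_combination (10*t^3+2*t^2-t-2)*hs
  exact gen _ _ hu0 hv0 rfl rfl

end T2

noncomputable section T3

private lemma hcontg : Continuous g := by
  apply Continuous.div (by continuity) (by continuity)
  exact fun t => (hQ_pos t).ne'

private lemma hftc : ∫ t in (0:ℝ)..1, g t = FF 1 - FF 0 :=
  intervalIntegral.integral_eq_sub_of_hasDerivAt (fun t _ => hderiv_s9 t)
    (hcontg.intervalIntegrable 0 1)

private lemma hval : FF 1 - FF 0 = 5/2
    - (((5-Real.sqrt 5)/4) * Real.log ((5+Real.sqrt 5)/2)
       + ((5+Real.sqrt 5)/4) * Real.log ((5-Real.sqrt 5)/2))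
    + (Real.sqrt 5/da)*(π/10) - (Real.sqrt 5/db)*(3*π/10) := by
  have k1 : ((1:ℝ)^2 + ((1+Real.sqrt 5)/2)*1 + 1) = (5+Real.sqrt 5)/2 := by ring
  have k2 : ((1:ℝ)^2 + ((1-Real.sqrt 5)/2)*1 + 1) = (5-Real.sqrt 5)/2 := by ring
  have k3 : ((0:ℝ)^2 + ((1+Real.sqrt 5)/2)*0 + 1) = 1 := by ring
  have k4 : ((0:ℝ)^2 + ((1-Real.sqrt 5)/2)*0 + 1) = 1 := by ring
  have k5 : (2*(1:ℝ) + (1+Real.sqrt 5)/2)/da = (2+(1+Real.sqrt 5)/2)/da := by norm_num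
  have k6 : (2*(1:ℝ) + (1-Real.sqrt 5)/2)/db = (2+(1-Real.sqrt 5)/2)/db := by norm_num
  have k7 : (2*(0:ℝ) + (1+Real.sqrt 5)/2)/da = ((1+Real.sqrt 5)/2)/da := by norm_num
  have k8 : (2*(0:ℝ) + (1-Real.sqrt 5)/2)/db = ((1-Real.sqrt 5)/2)/db := by norm_num
  rw [FF, FF, k1, k2, k3, k4, k5, k6, k7, k8, harc2, harc4, harc1, harc3, Real.log_one]
  ring

private lemma hint_m (m : ℕ) : ∫ t in (0:ℝ)..1, (5*t^(5*m+4) - 5*t^(5*m+6))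
    = 1/((m:ℝ)+1) - 5/(5*(m:ℝ)+7) := by
  rw [intervalIntegral.integral_sub
      ((continuous_const.mul (continuous_pow _)).intervalIntegrable (μ := volume) (u := fun t : ℝ => 5*t^(5*m+4)) _ _)
      ((continuous_const.mul (continuous_pow _)).intervalIntegrable (μ := volume) (u := fun t : ℝ => 5*t^(5*m+6)) _ _),
    intervalIntegral.integral_const_mul, intervalIntegral.integral_const_mul,
    integral_pow, integral_pow]
  have h1 : (0:ℝ) < (m:ℝ)+1 := by positivity
  have h2 : (0:ℝ) < 5*(m:ℝ)+7 := by positivity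
  push_cast
  rw [one_pow, one_pow, zero_pow (by omega), zero_pow (by omega)]
  field_simp
  ring

private lemma hsummable : Summable (fun m : ℕ => 1/((m:ℝ)+1) - 5/(5*(m:ℝ)+7)) := by
  have h2 : Summable (fun m : ℕ => 2*(1/((m:ℝ)+1)^2)) := by
    apply Summable.mul_left
    have h3 : Summable (fun n : ℕ => 1/(n:ℝ)^2) := summable_one_div_nat_pow.2 one_lt_two
    have h4 := (summable_nat_add_iff 1).2 h3
    apply h4.congr
    intro n; push_cast; ring
  apply Summable.of_nonneg_of_le _ _ h2
  · intro m
    have h1 : (0:ℝ) < (m:ℝ)+1 := by positivity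
    have h5 : (0:ℝ) < 5*(m:ℝ)+7 := by positivity
    rw [sub_nonneg, div_le_div_iff₀ h5 h1]
    nlinarith [Nat.cast_nonneg (α := ℝ) m]
  · intro m
    have h1 : (0:ℝ) < (m:ℝ)+1 := by positivity
    have h5 : (0:ℝ) < 5*(m:ℝ)+7 := by positivity
    have e0 : 2*(1/((m:ℝ)+1)^2) = 2/((m:ℝ)+1)^2 := by ring
    rw [e0, div_sub_div _ _ h1.ne' h5.ne', div_le_div_iff₀ (by positivity) (by positivity)]
    nlinarith [Nat.cast_nonneg (α := ℝ) m]

private lemma hpt {t : ℝ} (ht : t ∈ Set.Ioo (0:ℝ) 1) :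
    ∑' m : ℕ, (5*t^(5*m+4) - 5*t^(5*m+6)) = g t := by
  obtain ⟨h0, h1⟩ := ht
  have h5 : t^5 < 1 := pow_lt_one₀ h0.le h1 (by norm_num)
  have hterm : ∀ m : ℕ, 5*t^(5*m+4) - 5*t^(5*m+6) = (5*t^4 - 5*t^6)*(t^5)^m := by
    intro m; rw [pow_add, pow_add, pow_mul]; ring
  rw [tsum_congr hterm, tsum_mul_left, tsum_geometric_of_lt_one (by positivity) h5, g]
  have hQ := hQ_pos t
  have h15 : (1:ℝ) - t^5 ≠ 0 := by
    have : (0:ℝ) < 1 - t^5 := by linarith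
    exact this.ne'
  field_simp
  ring

private lemma hswap : ∑' m : ℕ, (∫ t in (0:ℝ)..1, (5*t^(5*m+4) - 5*t^(5*m+6)))
    = ∫ t in (0:ℝ)..1, g t := by
  have hc : ∀ m : ℕ, Continuous (fun t : ℝ => 5*t^(5*m+4) - 5*t^(5*m+6)) := by
    intro m; exact (continuous_const.mul (continuous_pow _)).sub
      (continuous_const.mul (continuous_pow _))
  have hInt : ∀ m : ℕ, MeasureTheory.Integrable (fun t : ℝ => 5*t^(5*m+4) - 5*t^(5*m+6))
      (MeasureTheory.volume.restrict (Set.Ioc 0 1)) := fun m =>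
    ((hc m).integrableOn_Ioc)
  have hnorm : ∀ m : ℕ, (∫ t in Set.Ioc (0:ℝ) 1, ‖5*t^(5*m+4) - 5*t^(5*m+6)‖)
      = 1/((m:ℝ)+1) - 5/(5*(m:ℝ)+7) := by
    intro m
    rw [← hint_m m, intervalIntegral.integral_of_le zero_le_one]
    apply MeasureTheory.setIntegral_congr_fun measurableSet_Ioc
    intro t ht
    dsimp only
    rw [Real.norm_eq_abs, abs_of_nonneg]
    have hle : t^(5*m+6) ≤ t^(5*m+4) := pow_le_pow_of_le_one ht.1.le ht.2 (by omega)
    linarith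
  calc ∑' m : ℕ, (∫ t in (0:ℝ)..1, (5*t^(5*m+4) - 5*t^(5*m+6)))
      = ∑' m : ℕ, (∫ t in Set.Ioc (0:ℝ) 1, (5*t^(5*m+4) - 5*t^(5*m+6))) := by
        refine tsum_congr fun m => ?_
        rw [intervalIntegral.integral_of_le zero_le_one]
    _ = ∫ t in Set.Ioc (0:ℝ) 1, (∑' m : ℕ, (5*t^(5*m+4) - 5*t^(5*m+6))) := by
        refine (MeasureTheory.integral_tsum_of_summable_integral_norm hInt ?_)
        apply Summable.congr hsummable
        intro m; exact (hnorm m).symm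
    _ = ∫ t in Set.Ioo (0:ℝ) 1, (∑' m : ℕ, (5*t^(5*m+4) - 5*t^(5*m+6))) :=
        MeasureTheory.integral_Ioc_eq_integral_Ioo
    _ = ∫ t in Set.Ioo (0:ℝ) 1, g t :=
        MeasureTheory.setIntegral_congr_fun measurableSet_Ioo fun t ht => hpt ht
    _ = ∫ t in Set.Ioc (0:ℝ) 1, g t := MeasureTheory.integral_Ioc_eq_integral_Ioo.symm
    _ = ∫ t in (0:ℝ)..1, g t := (intervalIntegral.integral_of_le zero_le_one).symm

end T3

theorem stmt_9 :
    (∑' m : ℕ, (7/5 : ℝ) / ((m + 1) * (m + (7/5 : ℝ)))) = (7/2) * (5/2 - Real.log 10 - ((Real.sqrt 5 - 1) / Real.sqrt (10 + 2 * Real.sqrt 5)) * Real.pi / 2 + (1/2) * (Real.sqrt 5 * Real.log ((Real.sqrt 5 + 1) / 2) - Real.log (Real.sqrt 5 / 4))) := by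
  have hterm : ∀ m : ℕ, (7/5 : ℝ) / ((m + 1) * (m + (7/5 : ℝ)))
      = (7/2) * (∫ t in (0:ℝ)..1, (5*t^(5*m+4) - 5*t^(5*m+6))) := by
    intro m
    rw [hint_m m]
    have h1 : (0:ℝ) < (m:ℝ)+1 := by positivity
    have h2 : (0:ℝ) < 5*(m:ℝ)+7 := by positivity
    have h3 : (0:ℝ) < (m:ℝ)+7/5 := by positivity
    field_simp
    ring
  rw [tsum_congr hterm, tsum_mul_left, hswap, hftc, hval]
  have := hlog
  have := hpi
  linarith [hlog, hpi]
end

section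
/- The series ∑_{m=0}^∞ a/((m+1)(m+a)) with a = 11/10 equals 11·(10 − log 20 − (√(10+2√5)/(√5−1))·π/2 + (1/2)·(√5·log(√5−2) − log √5)). -/
open Real Filter Topology Set Finset

noncomputable section Stmt12Aux

private def S5 : ℝ := Real.sqrt 5

private lemma hS5sq : S5 ^ 2 = 5 := Real.sq_sqrt (by norm_num)

private lemma hS5pos : 0 < S5 := Real.sqrt_pos.mpr (by norm_num)

private lemma hS5gt2 : 2 < S5 := by
  nlinarith [hS5sq, hS5pos]

private lemma hS5lt3 : S5 < 3 := by
  nlinarith [hS5sq, hS5pos]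

private def b1 : ℝ := (1 + S5) / 4
private def b2 : ℝ := (S5 - 1) / 4
private def w1 : ℝ := Real.sqrt (10 - 2 * S5) / 4
private def w2 : ℝ := Real.sqrt (10 + 2 * S5) / 4

private lemma hw1pos : 0 < w1 :=
  div_pos (Real.sqrt_pos.mpr (by nlinarith [hS5lt3, hS5pos])) (by norm_num)

private lemma hw2pos : 0 < w2 :=
  div_pos (Real.sqrt_pos.mpr (by nlinarith [hS5pos])) (by norm_num)

private lemma hw1sq : w1 ^ 2 = 1 - b1 ^ 2 := by
  unfold w1 b1
  rw [div_pow, Real.sq_sqrt (by nlinarith [hS5lt3, hS5pos] : (0:ℝ) ≤ 10 - 2 * S5)]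
  linear_combination (1/16 : ℝ) * hS5sq

private lemma hw2sq : w2 ^ 2 = 1 - b2 ^ 2 := by
  unfold w2 b2
  rw [div_pow, Real.sq_sqrt (by nlinarith [hS5pos] : (0:ℝ) ≤ 10 + 2 * S5)]
  linear_combination (1/16 : ℝ) * hS5sq

private lemma hb1lt1 : b1 < 1 := by unfold b1; nlinarith [hS5lt3]
private lemma hb1pos : 0 < b1 := by unfold b1; nlinarith [hS5pos]
private lemma hb2lt1 : b2 < 1 := by unfold b2; nlinarith [hS5lt3]
private lemma hb2pos : 0 < b2 := by unfold b2; nlinarith [hS5gt2]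

-- sqrt combination lemmas
private lemma hW : w1 + w2 = Real.sqrt (5 + 2 * S5) / 2 := by
  have h1 : (0:ℝ) ≤ 10 - 2 * S5 := by nlinarith [hS5lt3, hS5pos]
  have h2 : (0:ℝ) ≤ 10 + 2 * S5 := by nlinarith [hS5pos]
  have hmul : Real.sqrt (10 - 2 * S5) * Real.sqrt (10 + 2 * S5) = 4 * S5 := by
    rw [← Real.sqrt_mul h1]
    rw [show (10 - 2 * S5) * (10 + 2 * S5) = 4 ^ 2 * 5 by linear_combination (-4:ℝ) * hS5sq]
    rw [Real.sqrt_mul (by norm_num), Real.sqrt_sq (by norm_num)]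
    rfl
  have key : Real.sqrt (10 - 2 * S5) + Real.sqrt (10 + 2 * S5) = 2 * Real.sqrt (5 + 2 * S5) := by
    have hnn : (0:ℝ) ≤ Real.sqrt (10 - 2 * S5) + Real.sqrt (10 + 2 * S5) :=
      add_nonneg (Real.sqrt_nonneg _) (Real.sqrt_nonneg _)
    rw [← Real.sqrt_sq hnn]
    rw [show (Real.sqrt (10 - 2 * S5) + Real.sqrt (10 + 2 * S5)) ^ 2
        = Real.sqrt (10 - 2 * S5) ^ 2 + Real.sqrt (10 + 2 * S5) ^ 2
          + 2 * (Real.sqrt (10 - 2 * S5) * Real.sqrt (10 + 2 * S5)) by ring]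
    rw [Real.sq_sqrt h1, Real.sq_sqrt h2, hmul]
    rw [show 10 - 2 * S5 + (10 + 2 * S5) + 2 * (4 * S5) = 2 ^ 2 * (5 + 2 * S5) by ring]
    rw [Real.sqrt_mul (by norm_num), Real.sqrt_sq (by norm_num)]
  unfold w1 w2
  rw [← add_div, key]
  ring

private lemma hCT : Real.sqrt (10 + 2 * S5) / (S5 - 1) = Real.sqrt (5 + 2 * S5) := by
  rw [show (10 + 2 * S5 : ℝ) = (S5 - 1) ^ 2 * (5 + 2 * S5) by linear_combination (-2*S5 - 1) * hS5sq]
  rw [Real.sqrt_mul (sq_nonneg _), Real.sqrt_sq (by nlinarith [hS5gt2] : (0:ℝ) ≤ S5 - 1)]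
  have h : (S5 - 1 : ℝ) ≠ 0 := by nlinarith [hS5gt2]
  field_simp

-- generic quadratic positivity
private lemma hQpos (b w x : ℝ) (hw : w ^ 2 = 1 - b ^ 2) (hw0 : 0 < w) :
    0 < x ^ 2 - 2 * b * x + 1 := by
  nlinarith [sq_nonneg (x - b), sq_nonneg w]

-- derivative of one log/arctan block
private lemma hasDerivAt_term (b w c x : ℝ) (hw : w ^ 2 = 1 - b ^ 2) (hw0 : 0 < w) :
    HasDerivAt (fun z : ℝ => c * ((1/2) * Real.log (z ^ 2 - 2 * b * z + 1)
        + ((1 + b) / w) * Real.arctan ((z - b) / w)))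
      (c * (x + 1) / (x ^ 2 - 2 * b * x + 1)) x := by
  have hQ : 0 < x ^ 2 - 2 * b * x + 1 := hQpos b w x hw hw0
  have h1 : HasDerivAt (fun z : ℝ => z ^ 2 - 2 * b * z + 1) (2 * x - 2 * b) x := by
    have := ((hasDerivAt_pow 2 x).sub ((hasDerivAt_id x).const_mul (2 * b))).add_const 1
    refine this.congr_deriv ?_
    push_cast; ring
  have h2 : HasDerivAt (fun z : ℝ => Real.log (z ^ 2 - 2 * b * z + 1))
      ((2 * x - 2 * b) / (x ^ 2 - 2 * b * x + 1)) x := h1.log hQ.ne'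
  have h3 : HasDerivAt (fun z : ℝ => (z - b) / w) (1 / w) x := by
    have := ((hasDerivAt_id x).sub_const b).div_const w
    exact this
  have h4 : HasDerivAt (fun z : ℝ => Real.arctan ((z - b) / w))
      ((1 / w) / (1 + ((x - b) / w) ^ 2)) x := by
    have := h3.arctan
    refine this.congr_deriv ?_
    ring
  have h5 := ((h2.const_mul (1/2 : ℝ)).add (h4.const_mul ((1 + b) / w))).const_mul c
  refine h5.congr_deriv ?_
  have e1 : 1 + ((x - b) / w) ^ 2 = (x ^ 2 - 2 * b * x + 1) / w ^ 2 := by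
    field_simp
    linear_combination hw
  rw [e1]
  field_simp
  ring


-- negated-b facts
private lemma hw1sq' : w1 ^ 2 = 1 - (-b1) ^ 2 := by rw [neg_sq]; exact hw1sq
private lemma hw2sq' : w2 ^ 2 = 1 - (-b2) ^ 2 := by rw [neg_sq]; exact hw2sq

private def term (b w c : ℝ) : ℝ → ℝ := fun z =>
  c * ((1/2) * Real.log (z ^ 2 - 2 * b * z + 1) + ((1 + b) / w) * Real.arctan ((z - b) / w))

private lemma hasDerivAt_term' (b w c x : ℝ) (hw : w ^ 2 = 1 - b ^ 2) (hw0 : 0 < w) :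
    HasDerivAt (term b w c) (c * (x + 1) / (x ^ 2 - 2 * b * x + 1)) x :=
  hasDerivAt_term b w c x hw hw0

private def Fa : ℝ → ℝ := fun x =>
  x - (1/5) * Real.log (x + 1)
  + term b1 w1 ((b1 - 1)/5) x + term b2 w2 ((b2 - 1)/5) x
  + term (-b2) w2 ((-b2 - 1)/5) x + term (-b1) w1 ((-b1 - 1)/5) x

private def Da : ℝ → ℝ := fun x =>
  1 - (1/5) * (1 / (x + 1))
  + ((b1 - 1)/5) * (x + 1) / (x ^ 2 - 2 * b1 * x + 1)
  + ((b2 - 1)/5) * (x + 1) / (x ^ 2 - 2 * b2 * x + 1)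
  + ((-b2 - 1)/5) * (x + 1) / (x ^ 2 - 2 * (-b2) * x + 1)
  + ((-b1 - 1)/5) * (x + 1) / (x ^ 2 - 2 * (-b1) * x + 1)

private lemma hasDerivAt_Fa (x : ℝ) (hx : -1 < x) : HasDerivAt Fa (Da x) x := by
  have hx0 : x + 1 ≠ 0 := by linarith
  have hlog : HasDerivAt (fun z : ℝ => Real.log (z + 1)) (1 / (x + 1)) x := by
    have := (((hasDerivAt_id x).add_const 1).log hx0)
    exact this
  have h := ((((((hasDerivAt_id x).sub (hlog.const_mul (1/5 : ℝ))).add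
      (hasDerivAt_term' b1 w1 ((b1 - 1)/5) x hw1sq hw1pos)).add
      (hasDerivAt_term' b2 w2 ((b2 - 1)/5) x hw2sq hw2pos)).add
      (hasDerivAt_term' (-b2) w2 ((-b2 - 1)/5) x hw2sq' hw2pos)).add
      (hasDerivAt_term' (-b1) w1 ((-b1 - 1)/5) x hw1sq' hw1pos))
  exact h

private lemma keyD (x : ℝ) (hx1 : -1 < x) (hx2 : x < 1) :
    Da x = (x ^ 9 - x ^ 10) / (1 - x ^ 10) := by
  have hQ1 : 0 < x ^ 2 - 2 * b1 * x + 1 := hQpos b1 w1 x hw1sq hw1pos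
  have hQ2 : 0 < x ^ 2 - 2 * b2 * x + 1 := hQpos b2 w2 x hw2sq hw2pos
  have hQ3 : 0 < x ^ 2 - 2 * (-b2) * x + 1 := hQpos (-b2) w2 x hw2sq' hw2pos
  have hQ4 : 0 < x ^ 2 - 2 * (-b1) * x + 1 := hQpos (-b1) w1 x hw1sq' hw1pos
  have hxabs : |x| < 1 := abs_lt.mpr ⟨hx1, hx2⟩
  have hx10 : x ^ 10 < 1 := by
    calc x ^ 10 ≤ |x| ^ 10 := by
          rw [← abs_pow]; exact le_abs_self _
      _ < 1 := pow_lt_one₀ (abs_nonneg x) hxabs (by norm_num)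
  have hden : (0:ℝ) < 1 - x ^ 10 := by linarith
  have hx0 : x + 1 ≠ 0 := by linarith
  have hphi10 : (x ^ 2 - 2 * b1 * x + 1) * (x ^ 2 - 2 * (-b2) * x + 1)
      = x ^ 4 - x ^ 3 + x ^ 2 - x + 1 := by
    unfold b1 b2
    linear_combination (-(x ^ 2)/4) * hS5sq
  have hphi5 : (x ^ 2 - 2 * b2 * x + 1) * (x ^ 2 - 2 * (-b1) * x + 1)
      = x ^ 4 + x ^ 3 + x ^ 2 + x + 1 := by
    unfold b1 b2
    linear_combination (-(x ^ 2)/4) * hS5sq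
  have hP10 : (0:ℝ) < x ^ 4 - x ^ 3 + x ^ 2 - x + 1 := hphi10 ▸ mul_pos hQ1 hQ3
  have hP5 : (0:ℝ) < x ^ 4 + x ^ 3 + x ^ 2 + x + 1 := hphi5 ▸ mul_pos hQ2 hQ4
  have e13 : ((b1 - 1)/5) * (x + 1) / (x ^ 2 - 2 * b1 * x + 1)
      + ((-b2 - 1)/5) * (x + 1) / (x ^ 2 - 2 * (-b2) * x + 1)
      = (x + 1) * (-(3/10) * (x ^ 2 + 1) + (2/5) * x) / (x ^ 4 - x ^ 3 + x ^ 2 - x + 1) := by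
    rw [div_add_div _ _ hQ1.ne' hQ3.ne', hphi10]
    congr 1
    unfold b1 b2
    linear_combination (x * (x + 1)/20) * hS5sq
  have e24 : ((b2 - 1)/5) * (x + 1) / (x ^ 2 - 2 * b2 * x + 1)
      + ((-b1 - 1)/5) * (x + 1) / (x ^ 2 - 2 * (-b1) * x + 1)
      = (x + 1) * (-(1/2) * (x ^ 2 + 1)) / (x ^ 4 + x ^ 3 + x ^ 2 + x + 1) := by
    rw [div_add_div _ _ hQ2.ne' hQ4.ne', hphi5]
    congr 1
    unfold b1 b2
    linear_combination (x * (x + 1)/20) * hS5sq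
  unfold Da
  rw [show 1 - (1/5) * (1 / (x + 1))
      + ((b1 - 1)/5) * (x + 1) / (x ^ 2 - 2 * b1 * x + 1)
      + ((b2 - 1)/5) * (x + 1) / (x ^ 2 - 2 * b2 * x + 1)
      + ((-b2 - 1)/5) * (x + 1) / (x ^ 2 - 2 * (-b2) * x + 1)
      + ((-b1 - 1)/5) * (x + 1) / (x ^ 2 - 2 * (-b1) * x + 1)
      = 1 - (1/5) * (1 / (x + 1))
      + (((b1 - 1)/5) * (x + 1) / (x ^ 2 - 2 * b1 * x + 1)
        + ((-b2 - 1)/5) * (x + 1) / (x ^ 2 - 2 * (-b2) * x + 1))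
      + (((b2 - 1)/5) * (x + 1) / (x ^ 2 - 2 * b2 * x + 1)
        + ((-b1 - 1)/5) * (x + 1) / (x ^ 2 - 2 * (-b1) * x + 1)) by ring]
  rw [e13, e24]
  have hP10' := hP10.ne'
  have hP5' := hP5.ne'
  rw [eq_div_iff hden.ne', show (1:ℝ) - x ^ 10 = (1 - x) * (x + 1) * (x ^ 4 - x ^ 3 + x ^ 2 - x + 1) * (x ^ 4 + x ^ 3 + x ^ 2 + x + 1) by ring]
  have i1 := inv_mul_cancel₀ hx0
  have i2 := inv_mul_cancel₀ hP10'
  have i3 := inv_mul_cancel₀ hP5'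
  linear_combination (-(1/5) * (1 - x) * (x ^ 4 - x ^ 3 + x ^ 2 - x + 1) * (x ^ 4 + x ^ 3 + x ^ 2 + x + 1)) * i1
    + ((x + 1) * (-(3/10) * (x ^ 2 + 1) + (2/5) * x) * (1 - x) * (x + 1) * (x ^ 4 + x ^ 3 + x ^ 2 + x + 1)) * i2
    + ((x + 1) * (-(1/2) * (x ^ 2 + 1)) * (1 - x) * (x + 1) * (x ^ 4 - x ^ 3 + x ^ 2 - x + 1)) * i3


private def fAux (m : ℕ) : ℝ → ℝ := fun y =>
  y ^ (10*m+10) / (10*(m:ℝ)+10) - y ^ (10*m+11) / (10*(m:ℝ)+11)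

private lemma fAux_zero (m : ℕ) : fAux m 0 = 0 := by
  unfold fAux
  rw [zero_pow (by omega), zero_pow (by omega)]
  simp

private lemma hasDerivAt_fAux (m : ℕ) (y : ℝ) :
    HasDerivAt (fAux m) (y ^ (10*m+9) - y ^ (10*m+10)) y := by
  have h1 := (hasDerivAt_pow (10*m+10) y).div_const (10*(m:ℝ)+10)
  have h2 := (hasDerivAt_pow (10*m+11) y).div_const (10*(m:ℝ)+11)
  have h := h1.sub h2
  refine h.congr_deriv ?_
  have e1 : 10*m+10-1 = 10*m+9 := by omega
  have e2 : 10*m+11-1 = 10*m+10 := by omega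
  rw [e1, e2]
  have c1 : (10*(m:ℝ)+10) ≠ 0 := by positivity
  have c2 : (10*(m:ℝ)+11) ≠ 0 := by positivity
  push_cast
  field_simp

private lemma summable_u (r : ℝ) (h0 : 0 ≤ r) (h1 : r < 1) :
    Summable (fun m : ℕ => 2 * r ^ (10*m+9)) := by
  have hgeo : Summable (fun m : ℕ => (2 * r ^ 9) * (r ^ 10) ^ m) :=
    (summable_geometric_of_lt_one (by positivity) (pow_lt_one₀ h0 h1 (by norm_num))).mul_left _
  apply hgeo.congr
  intro m
  rw [← pow_mul]
  rw [show 10*m+9 = 9+10*m by omega, pow_add]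
  ring

private lemma deriv_bound (r : ℝ) (h1 : r < 1) (m : ℕ) (z : ℝ) (hz : z ∈ Ioo (-r) r) :
    ‖z ^ (10*m+9) - z ^ (10*m+10)‖ ≤ 2 * r ^ (10*m+9) := by
  have hz' : |z| ≤ r := le_of_lt (abs_lt.mpr ⟨hz.1, hz.2⟩)
  have h0 : 0 ≤ r := le_trans (abs_nonneg z) hz'
  have hb1 : |z ^ (10*m+9)| ≤ r ^ (10*m+9) := by
    rw [abs_pow]; exact pow_le_pow_left₀ (abs_nonneg z) hz' _
  have hb2 : |z ^ (10*m+10)| ≤ r ^ (10*m+10) := by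
    rw [abs_pow]; exact pow_le_pow_left₀ (abs_nonneg z) hz' _
  have hb3 : r ^ (10*m+10) ≤ r ^ (10*m+9) := pow_le_pow_of_le_one h0 (le_of_lt h1) (by omega)
  calc ‖z ^ (10*m+9) - z ^ (10*m+10)‖ ≤ |z ^ (10*m+9)| + |z ^ (10*m+10)| := abs_sub _ _
    _ ≤ 2 * r ^ (10*m+9) := by linarith

private lemma hasDerivAt_gsum (r : ℝ) (hr0 : 0 < r) (hr1 : r < 1) (y : ℝ)
    (hy : y ∈ Ioo (-r) r) :
    HasDerivAt (fun z => ∑' m : ℕ, fAux m z) ((y ^ 9 - y ^ 10) / (1 - y ^ 10)) y := by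
  have hsum0 : Summable (fun m : ℕ => fAux m 0) := by
    apply summable_zero.congr
    intro m; rw [fAux_zero]
  have H := hasDerivAt_tsum_of_isPreconnected (summable_u r hr0.le hr1) isOpen_Ioo
    (convex_Ioo (-r) r).isPreconnected (fun m z _ => hasDerivAt_fAux m z)
    (fun m z hz => deriv_bound r hr1 m z hz) (by constructor <;> linarith [hr0] : (0:ℝ) ∈ Ioo (-r) r)
    hsum0 hy
  refine H.congr_deriv ?_
  have hyabs : |y| < 1 := lt_trans (abs_lt.mpr ⟨hy.1, hy.2⟩) hr1
  have h0 : (0:ℝ) ≤ y ^ 10 := by positivity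
  have h10 : y ^ 10 < 1 := by
    calc y ^ 10 ≤ |y| ^ 10 := by rw [← abs_pow]; exact le_abs_self _
      _ < 1 := pow_lt_one₀ (abs_nonneg y) hyabs (by norm_num)
  have he : (fun m : ℕ => y ^ (10*m+9) - y ^ (10*m+10))
      = fun m : ℕ => (y ^ 9 - y ^ 10) * (y ^ 10) ^ m := by
    funext m
    rw [show 10*m+9 = 9+10*m by omega, show 10*m+10 = 10+10*m by omega,
      pow_add, pow_add, pow_mul]
    ring
  rw [he, tsum_mul_left, tsum_geometric_of_lt_one h0 h10, div_eq_mul_inv]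

private lemma fAux_nonneg (m : ℕ) (t : ℝ) (h0 : 0 ≤ t) (h1 : t ≤ 1) : 0 ≤ fAux m t := by
  unfold fAux
  have hp : t ^ (10*m+11) ≤ t ^ (10*m+10) := pow_le_pow_of_le_one h0 h1 (by omega)
  have d1 : (0:ℝ) < 10*(m:ℝ)+10 := by positivity
  have d2 : (10*(m:ℝ)+10) ≤ 10*(m:ℝ)+11 := by linarith
  have := div_le_div₀ (pow_nonneg h0 (10*m+10)) hp d1 d2
  linarith

private lemma fAux_le_one (m : ℕ) (t : ℝ) (h0 : 0 ≤ t) (h1 : t ≤ 1) : fAux m t ≤ fAux m 1 := by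
  have key : (10*(m:ℝ)+11) * t ^ (10*m+10) - (10*(m:ℝ)+10) * t ^ (10*m+11) ≤ 1 := by
    set p := 10*m+10 with hp
    have hgs : (1 - t) * (∑ j ∈ Finset.range p, t ^ j) = 1 - t ^ p := by
      have := geom_sum_mul t p
      linear_combination -this
    have hsum : (p:ℝ) * t ^ p ≤ ∑ j ∈ Finset.range p, t ^ j := by
      calc (p:ℝ) * t ^ p = ∑ _j ∈ Finset.range p, t ^ p := by
            rw [Finset.sum_const, Finset.card_range, nsmul_eq_mul]
        _ ≤ ∑ j ∈ Finset.range p, t ^ j :=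
            Finset.sum_le_sum fun j hj =>
              pow_le_pow_of_le_one h0 h1 (le_of_lt (Finset.mem_range.mp hj))
    have h1t : 0 ≤ 1 - t := by linarith
    have hmul := mul_le_mul_of_nonneg_left hsum h1t
    rw [hgs] at hmul
    have hps : t ^ (p+1) = t ^ p * t := pow_succ t p
    have hcast : ((p:ℕ):ℝ) = 10*(m:ℝ)+10 := by rw [hp]; push_cast; ring
    have h11 : 10*m+11 = p+1 := by omega
    rw [h11, hps]
    nlinarith [pow_nonneg h0 p]
  unfold fAux
  rw [one_pow, one_pow]
  have d1 : (0:ℝ) < 10*(m:ℝ)+10 := by positivity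
  have d2 : (0:ℝ) < 10*(m:ℝ)+11 := by positivity
  rw [div_sub_div _ _ d1.ne' d2.ne', div_sub_div _ _ d1.ne' d2.ne',
    div_le_div_iff₀ (by positivity) (by positivity)]
  nlinarith [key, mul_pos d1 d2]

private lemma fAux_one_le (m : ℕ) : fAux m 1 ≤ 1 / ((m:ℝ)+1) ^ 2 := by
  unfold fAux
  rw [one_pow, one_pow]
  have d1 : (0:ℝ) < 10*(m:ℝ)+10 := by positivity
  have d2 : (0:ℝ) < 10*(m:ℝ)+11 := by positivity
  rw [div_sub_div _ _ d1.ne' d2.ne', div_le_div_iff₀ (by positivity) (by positivity)]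
  have hm : (0:ℝ) ≤ (m:ℝ) := Nat.cast_nonneg m
  nlinarith

private lemma summable_bound : Summable (fun m : ℕ => 1 / ((m:ℝ)+1) ^ 2) := by
  have h2 : Summable (fun n : ℕ => 1 / (n:ℝ) ^ 2) :=
    Real.summable_one_div_nat_pow.mpr (by norm_num : (1:ℕ) < 2)
  have h3 := (summable_nat_add_iff 1).mpr h2
  apply h3.congr
  intro m
  push_cast
  ring

private lemma gFy (y : ℝ) (h0 : 0 ≤ y) (h1 : y < 1) :
    ∑' m : ℕ, fAux m y = Fa y - Fa 0 := by
  set r := (1+y)/2 with hrdef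
  have hr0 : 0 < r := by rw [hrdef]; linarith
  have hr1 : r < 1 := by rw [hrdef]; linarith
  have hyr : y < r := by rw [hrdef]; linarith
  have hderiv : ∀ z ∈ Ico 0 y, HasDerivWithinAt (fun z => (∑' m : ℕ, fAux m z) - Fa z) 0 (Ici z) z := by
    intro z hz
    have hz1 : z ∈ Ioo (-r) r := ⟨by linarith [hz.1], by linarith [hz.2]⟩
    have hd1 := hasDerivAt_gsum r hr0 hr1 z hz1
    have hd2 := hasDerivAt_Fa z (by linarith [hz.1])
    have hd := hd1.sub hd2
    rw [keyD z (by linarith [hz.1]) (by linarith [hz.2])] at hd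
    have hd' := hd.hasDerivWithinAt (s := Ici z)
    rw [sub_self] at hd'
    exact hd'
  have hcont : ContinuousOn (fun z => (∑' m : ℕ, fAux m z) - Fa z) (Icc 0 y) := by
    intro z hz
    have hz1 : z ∈ Ioo (-r) r := ⟨by linarith [hz.1], by linarith [hz.2]⟩
    exact (((hasDerivAt_gsum r hr0 hr1 z hz1).sub
      (hasDerivAt_Fa z (by linarith [hz.1]))).continuousAt).continuousWithinAt
  have hconst := constant_of_has_deriv_right_zero hcont hderiv y (right_mem_Icc.mpr h0)
  have h00 : (∑' m : ℕ, fAux m 0) = 0 := by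
    have he : (fun m : ℕ => fAux m 0) = fun _ => 0 := funext fAux_zero
    rw [he, tsum_zero]
  rw [h00] at hconst
  linarith

private lemma tsum_fAux_one : ∑' m : ℕ, fAux m 1 = Fa 1 - Fa 0 := by
  set y : ℕ → ℝ := fun n => 1 - 1/((n:ℝ)+1) with hydef
  have hy0 : ∀ n, 0 ≤ y n := by
    intro n
    have h : 1/((n:ℝ)+1) ≤ 1 := by
      rw [div_le_one (by positivity)]
      linarith [(Nat.cast_nonneg n : (0:ℝ) ≤ (n:ℝ))]
    simp only [hydef]
    linarith
  have hy1 : ∀ n, y n < 1 := by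
    intro n
    have h : 0 < 1/((n:ℝ)+1) := by positivity
    simp only [hydef]
    linarith
  have hylim : Tendsto y atTop (𝓝 1) := by
    have h := tendsto_one_div_add_atTop_nhds_zero_nat (𝕜 := ℝ)
    have h2 := (tendsto_const_nhds (x := (1:ℝ)) (f := atTop)).sub h
    simpa [hydef, one_div] using h2
  have hA : Tendsto (fun n => ∑' m : ℕ, fAux m (y n)) atTop (𝓝 (∑' m : ℕ, fAux m 1)) := by
    apply tendsto_tsum_of_dominated_convergence summable_bound
    · intro m
      have hc : Continuous (fAux m) := by
        unfold fAux
        exact ((continuous_pow _).div_const _).sub ((continuous_pow _).div_const _)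
      exact (hc.tendsto 1).comp hylim
    · filter_upwards with n m
      rw [Real.norm_eq_abs, abs_of_nonneg (fAux_nonneg m (y n) (hy0 n) (le_of_lt (hy1 n)))]
      exact le_trans (fAux_le_one m (y n) (hy0 n) (le_of_lt (hy1 n))) (fAux_one_le m)
  have hB : Tendsto (fun n => ∑' m : ℕ, fAux m (y n)) atTop (𝓝 (Fa 1 - Fa 0)) := by
    have he : (fun n => ∑' m : ℕ, fAux m (y n)) = fun n => Fa (y n) - Fa 0 :=
      funext fun n => gFy (y n) (hy0 n) (hy1 n)
    rw [he]
    have hcF : ContinuousAt Fa 1 := (hasDerivAt_Fa 1 (by norm_num)).continuousAt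
    exact ((hcF.tendsto).comp hylim).sub tendsto_const_nhds
  exact tendsto_nhds_unique hA hB


-- arctan lemmas
private lemma arctan_pair2 (b w : ℝ) (hw : w ^ 2 = 1 - b ^ 2) (hw0 : 0 < w)
    (hb1 : b < 1) (hb2 : -1 < b) :
    Real.arctan ((1 + b)/w) + Real.arctan ((1 - b)/w) = π/2 := by
  have hb1' : (0:ℝ) < 1 + b := by linarith
  have hx : 0 < (1 + b)/w := by positivity
  have hinv : ((1 + b)/w)⁻¹ = (1 - b)/w := by
    rw [inv_div]
    rw [div_eq_div_iff hb1'.ne' hw0.ne']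
    linear_combination hw
  rw [← hinv, Real.arctan_inv_of_pos hx]
  ring

private lemma cd_eq (b w : ℝ) (hw : w ^ 2 = 1 - b ^ 2) (hw0 : 0 < w) :
    ((b - 1)/5) * ((1 + b)/w) = -(w/5) := by
  field_simp
  linear_combination hw

private lemma cd_eq' (b w : ℝ) (hw : w ^ 2 = 1 - b ^ 2) (hw0 : 0 < w) :
    ((-b - 1)/5) * ((1 - b)/w) = -(w/5) := by
  field_simp
  linear_combination hw

private lemma pair_eval (b w : ℝ) (hw : w ^ 2 = 1 - b ^ 2) (hw0 : 0 < w)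
    (hb1 : b < 1) (hb2 : -1 < b) :
    (term b w ((b - 1)/5) 1 + term (-b) w ((-b - 1)/5) 1)
      - (term b w ((b - 1)/5) 0 + term (-b) w ((-b - 1)/5) 0)
    = (1/10) * ((b - 1) * Real.log (2 - 2*b) - (b + 1) * Real.log (2 + 2*b))
      - (w/5) * (π/2) := by
  have hcd := cd_eq b w hw hw0
  have hcd' := cd_eq' b w hw hw0
  have hp := arctan_pair2 b w hw hw0 hb1 hb2
  unfold term
  rw [show (1:ℝ)^2 - 2*b*1 + 1 = 2 - 2*b by ring,
      show (1:ℝ)^2 - 2*(-b)*1 + 1 = 2 + 2*b by ring,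
      show (0:ℝ)^2 - 2*b*0 + 1 = 1 by ring,
      show (0:ℝ)^2 - 2*(-b)*0 + 1 = 1 by ring,
      Real.log_one,
      show ((1:ℝ) - -b)/w = (1 + b)/w by ring,
      show ((0:ℝ) - b)/w = -(b/w) by ring,
      show ((0:ℝ) - -b)/w = b/w by ring,
      show (1:ℝ) + -b = 1 - b by ring,
      Real.arctan_neg]
  linear_combination (Real.arctan ((1 - b)/w) + Real.arctan (b/w)) * hcd
    + (Real.arctan ((1 + b)/w) - Real.arctan (b/w)) * hcd'
    + (-(w/5)) * hp

-- log lemmas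
private lemma phi_pos : (0:ℝ) < (1 + S5)/2 := by nlinarith [hS5pos]

private lemma Log1 : Real.log (2 - 2*((1 + S5)/4)) = -(2 * Real.log ((1 + S5)/2)) := by
  have harg : 2 - 2*((1 + S5)/4) = (((1 + S5)/2)^2)⁻¹ := by
    have h : (1 + S5) ≠ 0 := by nlinarith [hS5pos]
    field_simp
    linear_combination (1 - S5) * hS5sq
  rw [harg, Real.log_inv, Real.log_pow]
  push_cast
  ring

private lemma Log2 : Real.log (2 + 2*((1 + S5)/4)) = Real.log S5 + Real.log ((1 + S5)/2) := by
  have harg : 2 + 2*((1 + S5)/4) = S5 * ((1 + S5)/2) := by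
    linear_combination (-1/2) * hS5sq
  rw [harg, Real.log_mul hS5pos.ne' phi_pos.ne']

private lemma Log3 : Real.log (2 - 2*((S5 - 1)/4)) = Real.log S5 - Real.log ((1 + S5)/2) := by
  have harg : 2 - 2*((S5 - 1)/4) = S5 / ((1 + S5)/2) := by
    rw [eq_div_iff phi_pos.ne']
    linear_combination (-1/4) * hS5sq
  rw [harg, Real.log_div hS5pos.ne' phi_pos.ne']

private lemma Log4 : Real.log (2 + 2*((S5 - 1)/4)) = 2 * Real.log ((1 + S5)/2) := by
  have harg : 2 + 2*((S5 - 1)/4) = ((1 + S5)/2)^2 := by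
    linear_combination (-1/4) * hS5sq
  rw [harg, Real.log_pow]
  push_cast
  ring

private lemma Log5 : Real.log (S5 - 2) = -(3 * Real.log ((1 + S5)/2)) := by
  have harg : S5 - 2 = (((1 + S5)/2)^3)⁻¹ := by
    have h : (1 + S5) ≠ 0 := by nlinarith [hS5pos]
    field_simp
    linear_combination (S5^2 + S5 + 2) * hS5sq
  rw [harg, Real.log_inv, Real.log_pow]
  push_cast
  ring

private lemma Log6 : Real.log 20 = 2 * Real.log 2 + 2 * Real.log S5 := by
  rw [show (20:ℝ) = (2 * S5)^2 by linear_combination (-4) * hS5sq, Real.log_pow,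
    Real.log_mul two_ne_zero hS5pos.ne']
  push_cast
  ring

private lemma evalFa : Fa 1 - Fa 0
    = 1 + (1/10) * (-(Real.log 20) - Real.sqrt (5 + 2*S5) * π / 2
      + (1/2) * (S5 * Real.log (S5 - 2) - Real.log S5)) := by
  have hb1d : b1 = (1 + S5)/4 := rfl
  have hb2d : b2 = (S5 - 1)/4 := rfl
  have P1 := pair_eval b1 w1 hw1sq hw1pos hb1lt1 (by linarith [hb1pos])
  have P2 := pair_eval b2 w2 hw2sq hw2pos hb2lt1 (by linarith [hb2pos])
  rw [hb1d] at P1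
  rw [hb2d] at P2
  have L1 := Log1
  have L2 := Log2
  have L3 := Log3
  have L4 := Log4
  have L5 := Log5
  have L6 := Log6
  have W := hW
  unfold Fa
  rw [hb1d, hb2d]
  rw [show ((0:ℝ) + 1) = 1 by norm_num, Real.log_one, show ((1:ℝ) + 1) = 2 by norm_num]
  linear_combination P1 + P2 + (1/10) * L6 - (S5/20) * L5
    + (((1 + S5)/4 - 1)/10) * L1 - (((1 + S5)/4 + 1)/10) * L2
    + (((S5 - 1)/4 - 1)/10) * L3 - (((S5 - 1)/4 + 1)/10) * L4
    - (π/10) * W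

end Stmt12Aux

theorem stmt_12 :
    (∑' m : ℕ, (11/10 : ℝ) / ((m + 1) * (m + (11/10 : ℝ)))) = 11 * (10 - Real.log 20 - (Real.sqrt (10 + 2 * Real.sqrt 5) / (Real.sqrt 5 - 1)) * Real.pi / 2 + (1/2) * (Real.sqrt 5 * Real.log (Real.sqrt 5 - 2) - Real.log (Real.sqrt 5))) := by
  have key : ∀ m : ℕ, (11/10 : ℝ) / ((m + 1) * (m + (11/10 : ℝ))) = 110 * fAux m 1 := by
    intro m
    unfold fAux
    rw [one_pow, one_pow]
    have d1 : ((m:ℝ) + 1) ≠ 0 := by positivity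
    have d2 : ((m:ℝ) + 11/10) ≠ 0 := by positivity
    have d3 : (10*(m:ℝ) + 10) ≠ 0 := by positivity
    have d4 : (10*(m:ℝ) + 11) ≠ 0 := by positivity
    field_simp
    ring
  show (∑' m : ℕ, (11/10 : ℝ) / ((m + 1) * (m + (11/10 : ℝ))))
    = 11 * (10 - Real.log 20 - (Real.sqrt (10 + 2 * S5) / (S5 - 1)) * Real.pi / 2
      + (1/2) * (S5 * Real.log (S5 - 2) - Real.log S5))
  rw [tsum_congr key, tsum_mul_left, tsum_fAux_one, evalFa, hCT]
  ring
end
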